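/- arXiv:1801.05494 — 7 statements merged into one kernel-verified Lean document; each statement's English description precedes it below -/
import Mathlib

section
/- Let X be a finite set with |X| = r where r ≥ 3, and fix x ∈ X. Then the subconstituent algebra T of K_r with respect to x is isomorphic, as a ℂ-algebra, to Mat₂(ℂ) × ℂ (the direct product of the algebra of 2×2 complex matrices with ℂ). -/
/-- The all-ones matrix `J` on index set `X`. -/
def Jmat (X : Type*) : Matrix X X ℂ := Matrix.of fun _ _ => 1

/-- The 0-th dual idempotent `E₀*` with respect to the base vertex `x`. -/
def E0s (X : Type*) [DecidableEq X] (x : X) : Matrix X X ℂ :=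
  Matrix.diagonal fun y => if y = x then 1 else 0

/-- The adjacency matrix `A = J - I` of the complete graph `K_r`. -/
def Amat (X : Type*) [DecidableEq X] : Matrix X X ℂ := Jmat X - 1

/-- The dual adjacency matrix `A* = r E₀* - I` of `K_r` with respect to `x`. -/
def AmatStar (X : Type*) [DecidableEq X] (r : ℕ) (x : X) : Matrix X X ℂ :=
  (r : ℂ) • E0s X x - 1

/-!
Put `E = E₀*` and `J = A + I`, so that `T` is generated by `E` and `J`. The idempotents
`p₀ = E`, `p₁ = 1 - E` satisfy `J pⱼ J = dⱼ J` with `d = (1, r - 1)`, and that is what makes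
`eᵢⱼ = dⱼ⁻¹ pᵢ J pⱼ` a system of 2 × 2 matrix units. Any such system, together with the
complementary idempotent `f = 1 - e₀₀ - e₁₁`, defines an algebra map
`Mat₂(ℂ) × ℂ → Mat_X(ℂ)`, `(M, c) ↦ ∑ Mᵢⱼ eᵢⱼ + c f`, which is injective as soon as the `eᵢᵢ`
and `f` are nonzero. Here `tr eᵢᵢ = tr E = 1` and `tr f = r - 2 ≠ 0`. The image contains `E = e₀₀`
and `J = ∑ dⱼ eᵢⱼ`, and every `eᵢⱼ` is a polynomial in `E` and `J`, so the image is exactly `T`.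
-/

open Matrix Finset

section MatrixUnits

variable {R A n : Type*} [CommRing R] [Ring A] [Algebra R A] [DecidableEq n]

def IsMatrixUnits (e : n → n → A) : Prop :=
  ∀ i j k l, e i j * e k l = if j = k then e i l else 0

theorem IsMatrixUnits.of_orthogonalIdempotents {K : Type*} [Field K] [Algebra K A] {p : n → A}
    (hp : OrthogonalIdempotents p) {J : A} {d : n → K} (hJ : ∀ j, J * p j * J = d j • J)
    (hd : ∀ j, d j ≠ 0) : IsMatrixUnits fun i j => (d j)⁻¹ • (p i * J * p j) := by
  intro i j k l
  have hassoc : p i * J * p j * (p k * J * p l) = p i * (J * (p j * p k) * J) * p l := by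
    simp only [mul_assoc]
  rw [smul_mul_smul_comm, hassoc, hp.mul_eq]
  split_ifs with hjk
  · rw [hJ, mul_smul_comm, smul_mul_assoc, smul_smul, mul_right_comm,
      inv_mul_cancel₀ (hd j), one_mul]
  · simp

theorem IsMatrixUnits.trace_eq {m : Type*} [Fintype m] [DecidableEq m]
    {e : n → n → Matrix m m R} (he : IsMatrixUnits e) (i j : n) :
    trace (e i i) = trace (e j j) := by
  have hij := he i j j i
  have hji := he j i i j
  rw [if_pos rfl] at hij hji
  rw [← hij, ← hji, trace_mul_comm]

variable [Fintype n]

variable (R) in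
def matrixUnitsLinearMap (e : n → n → A) : Matrix n n R × R →ₗ[R] A where
  toFun p := ∑ i, ∑ j, p.1 i j • e i j + p.2 • (1 - ∑ k, e k k)
  map_add' p q := by
    simp only [Prod.fst_add, Prod.snd_add, Matrix.add_apply, add_smul, sum_add_distrib]
    abel
  map_smul' c p := by
    simp only [Prod.smul_fst, Prod.smul_snd, Matrix.smul_apply, smul_eq_mul, mul_smul, smul_sum,
      RingHom.id_apply, smul_add]

theorem matrixUnitsLinearMap_one (e : n → n → A) : matrixUnitsLinearMap R e 1 = 1 := by
  simp [matrixUnitsLinearMap, one_apply, ite_smul]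

namespace IsMatrixUnits

variable {e : n → n → A} (he : IsMatrixUnits e)
include he

theorem mul_one_sub_sum (i j : n) : e i j * (1 - ∑ k, e k k) = 0 := by
  simp [mul_sub, mul_sum, he i j]

theorem one_sub_sum_mul (i j : n) : (1 - ∑ k, e k k) * e i j = 0 := by
  simp [sub_mul, sum_mul, he _ _ i j]

theorem sum_smul_mul_sum_smul (M N : Matrix n n R) :
    (∑ i, ∑ j, M i j • e i j) * (∑ k, ∑ l, N k l • e k l) = ∑ i, ∑ l, (M * N) i l • e i l := by
  calc _ = ∑ i, ∑ j, ∑ k, ∑ l, (M i j * N k l) • (e i j * e k l) := by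
        simp only [sum_mul_sum, smul_mul_smul_comm]
        exact sum_congr rfl fun _ _ => sum_comm
    _ = ∑ i, ∑ j, ∑ l, (M i j * N j l) • e i l := by
        refine sum_congr rfl fun i _ => sum_congr rfl fun j _ => ?_
        simp only [he i j, smul_ite, smul_zero]
        rw [sum_comm]
        simp
    _ = _ := by
        simp only [mul_apply, sum_smul]
        exact sum_congr rfl fun i _ => sum_comm

theorem matrixUnitsLinearMap_mul (p q : Matrix n n R × R) :
    matrixUnitsLinearMap R e (p * q) =
      matrixUnitsLinearMap R e p * matrixUnitsLinearMap R e q := by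
  have hleft (M : Matrix n n R) : (∑ i, ∑ j, M i j • e i j) * (1 - ∑ k, e k k) = 0 := by
    simp [sum_mul, he.mul_one_sub_sum]
  have hright (M : Matrix n n R) : (1 - ∑ k, e k k) * (∑ i, ∑ j, M i j • e i j) = 0 := by
    simp [mul_sum, he.one_sub_sum_mul]
  have hidem : (1 - ∑ k, e k k) * (1 - ∑ k, e k k) = 1 - ∑ k, e k k := by
    simp only [mul_sub, mul_one, mul_sum, he.one_sub_sum_mul, sum_const_zero, sub_zero]
  simp only [matrixUnitsLinearMap, LinearMap.coe_mk, AddHom.coe_mk, Prod.fst_mul, Prod.snd_mul,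
    add_mul, mul_add, smul_mul_assoc, mul_smul_comm, hleft, hright, hidem,
    he.sum_smul_mul_sum_smul, smul_zero, add_zero, zero_add, smul_smul, mul_comm q.2]

variable (R) in
def toAlgHom : Matrix n n R × R →ₐ[R] A :=
  AlgHom.ofLinearMap (matrixUnitsLinearMap R e) (matrixUnitsLinearMap_one e)
    he.matrixUnitsLinearMap_mul

theorem toAlgHom_apply (p : Matrix n n R × R) :
    he.toAlgHom R p = ∑ i, ∑ j, p.1 i j • e i j + p.2 • (1 - ∑ k, e k k) :=
  rfl

theorem toAlgHom_single (i j : n) (c : R) : he.toAlgHom R (single i j c, 0) = c • e i j := by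
  simp [toAlgHom_apply, single_apply, ite_smul, ite_and]

theorem toAlgHom_injective [IsDomain R] [Module.IsTorsionFree R A] (hdiag : ∀ i, e i i ≠ 0)
    (hcompl : 1 - ∑ k, e k k ≠ 0) : Function.Injective (he.toAlgHom R) := by
  rw [injective_iff_map_eq_zero]
  rintro ⟨M, c⟩ h
  have hM : ∀ i j, M i j = 0 := fun i j => by
    have hcut : he.toAlgHom R ((single i i 1, 0) * (M, c) * (single j j 1, 0)) =
        M i j • e i j := by
      simp [he.toAlgHom_single]
    rw [map_mul, map_mul, h, mul_zero, zero_mul, eq_comm, smul_eq_zero] at hcut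
    refine hcut.resolve_right fun hij => hdiag i ?_
    simpa [hij] using (he i j j i).symm
  have hc : c = 0 := by
    have hcut : he.toAlgHom R ((0, 1) * (M, c) * (0, 1)) = c • (1 - ∑ k, e k k) := by
      simp [toAlgHom_apply]
    rw [map_mul, map_mul, h, mul_zero, zero_mul, eq_comm, smul_eq_zero] at hcut
    exact hcut.resolve_right hcompl
  exact Prod.ext (Matrix.ext hM) hc

theorem range_toAlgHom_le {S : Subalgebra R A} (hS : ∀ i j, e i j ∈ S) :
    (he.toAlgHom R).range ≤ S := by
  rintro _ ⟨⟨M, c⟩, rfl⟩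
  change he.toAlgHom R (M, c) ∈ S
  rw [toAlgHom_apply]
  exact S.add_mem (S.sum_mem fun i _ => S.sum_mem fun j _ => S.smul_mem (hS i j) _)
    (S.smul_mem (S.sub_mem S.one_mem (S.sum_mem fun k _ => hS k k)) _)

end IsMatrixUnits

end MatrixUnits

section CompleteGraph

variable {X : Type*} [Fintype X]

theorem Jmat_mul_Jmat : Jmat X * Jmat X = (Fintype.card X : ℂ) • Jmat X := by
  ext y z
  simp [Jmat, mul_apply]

theorem natCast_card_sub_one_ne_zero (hr : 2 ≤ Fintype.card X) :
    (Fintype.card X : ℂ) - 1 ≠ 0 := by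
  rw [sub_ne_zero]
  exact_mod_cast (by omega : Fintype.card X ≠ 1)

variable [DecidableEq X] (x : X)

theorem isIdempotentElem_E0s : IsIdempotentElem (E0s X x) := by
  simp [IsIdempotentElem, E0s, diagonal_mul_diagonal]

theorem Jmat_mul_E0s_mul_Jmat : Jmat X * E0s X x * Jmat X = Jmat X := by
  ext y z
  simp [Jmat, E0s, mul_apply, diagonal_apply]

theorem E0s_mul_Jmat_mul_E0s : E0s X x * Jmat X * E0s X x = E0s X x := by
  ext y z
  rw [E0s, mul_diagonal, diagonal_mul, diagonal_apply]
  simp only [Jmat, of_apply, mul_one]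
  grind

theorem trace_E0s : trace (E0s X x) = 1 := by
  simp [E0s, trace_diagonal]

theorem Jmat_mul_mul_Jmat (j : Fin 2) :
    Jmat X * ![E0s X x, 1 - E0s X x] j * Jmat X =
      ![1, (Fintype.card X : ℂ) - 1] j • Jmat X := by
  fin_cases j
  · simp [Jmat_mul_E0s_mul_Jmat]
  · simp [mul_sub, sub_mul, Jmat_mul_Jmat, Jmat_mul_E0s_mul_Jmat, sub_smul]

/- With `u = 1_{x}` and `w = 1_{X \ {x}}`, these are `u uᵀ`, `u wᵀ / (r - 1)`, `w uᵀ` and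
`w wᵀ / (r - 1)`: matrix units for the span of `u` and `w`. -/
variable (X) in
noncomputable def completeGraphUnits : Fin 2 → Fin 2 → Matrix X X ℂ :=
  fun i j => (![1, (Fintype.card X : ℂ) - 1] j)⁻¹ •
    (![E0s X x, 1 - E0s X x] i * Jmat X * ![E0s X x, 1 - E0s X x] j)

theorem isMatrixUnits_completeGraphUnits (hr : 2 ≤ Fintype.card X) :
    IsMatrixUnits (completeGraphUnits X x) := by
  exact .of_orthogonalIdempotents
    (CompleteOrthogonalIdempotents.of_isIdempotentElem
      (isIdempotentElem_E0s x)).toOrthogonalIdempotents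
    (Jmat_mul_mul_Jmat x) (Fin.forall_fin_two.2 ⟨one_ne_zero, natCast_card_sub_one_ne_zero hr⟩)

theorem completeGraphUnits_zero_zero : completeGraphUnits X x 0 0 = E0s X x := by
  simp [completeGraphUnits, E0s_mul_Jmat_mul_E0s]

theorem sum_smul_completeGraphUnits (hr : 2 ≤ Fintype.card X) :
    ∑ i, ∑ j, ![1, (Fintype.card X : ℂ) - 1] j • completeGraphUnits X x i j = Jmat X := by
  simp only [completeGraphUnits, Fin.sum_univ_two, smul_smul]
  simp [mul_inv_cancel₀ (natCast_card_sub_one_ne_zero (X := X) hr)]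
  noncomm_ring

theorem injective_toAlgHom_completeGraphUnits (hr : 3 ≤ Fintype.card X)
    (he : IsMatrixUnits (completeGraphUnits X x)) : Function.Injective (he.toAlgHom ℂ) := by
  have htrace (i : Fin 2) : trace (completeGraphUnits X x i i) = 1 := by
    rw [he.trace_eq i 0, completeGraphUnits_zero_zero, trace_E0s]
  refine he.toAlgHom_injective (fun i h => by simpa [h] using htrace i) fun h => ?_
  have htrace_compl := congrArg trace h
  simp only [trace_sub, trace_one, trace_sum, htrace, sum_const, card_univ, Fintype.card_fin,
    trace_zero, nsmul_eq_mul, mul_one, sub_eq_zero] at htrace_compl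
  have : Fintype.card X = 2 := by exact_mod_cast htrace_compl
  omega

theorem range_toAlgHom_completeGraphUnits (hr : 2 ≤ Fintype.card X)
    (he : IsMatrixUnits (completeGraphUnits X x)) :
    (he.toAlgHom ℂ).range = Algebra.adjoin ℂ {Amat X, AmatStar X (Fintype.card X) x} := by
  set T := Algebra.adjoin ℂ {Amat X, AmatStar X (Fintype.card X) x}
  have hJ : Jmat X ∈ T := by
    rw [← sub_add_cancel (Jmat X) 1]
    exact T.add_mem (Algebra.subset_adjoin (by simp [Amat])) T.one_mem
  have hE : E0s X x ∈ T := by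
    have hr0 : (Fintype.card X : ℂ) ≠ 0 := by exact_mod_cast (by omega : Fintype.card X ≠ 0)
    rw [← inv_smul_smul₀ hr0 (E0s X x), ← sub_add_cancel ((Fintype.card X : ℂ) • E0s X x) 1]
    exact T.smul_mem (T.add_mem (Algebra.subset_adjoin (by simp [AmatStar])) T.one_mem) _
  have hp : ∀ i, ![E0s X x, 1 - E0s X x] i ∈ T :=
    Fin.forall_fin_two.2 ⟨hE, T.sub_mem T.one_mem hE⟩
  refine le_antisymm (he.range_toAlgHom_le fun i j =>
    T.smul_mem (T.mul_mem (T.mul_mem (hp i) hJ) (hp j)) _) ?_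
  have hJ' : Jmat X ∈ (he.toAlgHom ℂ).range :=
    (AlgHom.mem_range _).2 ⟨(of fun _ j => ![1, (Fintype.card X : ℂ) - 1] j, 0), by
      simpa [he.toAlgHom_apply] using sum_smul_completeGraphUnits x hr⟩
  have hE' : E0s X x ∈ (he.toAlgHom ℂ).range :=
    (AlgHom.mem_range _).2 ⟨(single 0 0 1, 0), by
      rw [he.toAlgHom_single, one_smul, completeGraphUnits_zero_zero]⟩
  rw [Algebra.adjoin_le_iff, Set.insert_subset_iff, Set.singleton_subset_iff]
  exact ⟨Subalgebra.sub_mem _ hJ' (Subalgebra.one_mem _),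
    Subalgebra.sub_mem _ (Subalgebra.smul_mem _ hE' _) (Subalgebra.one_mem _)⟩

end CompleteGraph

theorem stmt2 (X : Type*) [Fintype X] [DecidableEq X] (r : ℕ) (hr : 3 ≤ r)
    (hcard : Fintype.card X = r) (x : X) :
    Nonempty (↥(Algebra.adjoin ℂ ({Amat X, AmatStar X r x} : Set (Matrix X X ℂ)))
      ≃ₐ[ℂ] (Matrix (Fin 2) (Fin 2) ℂ × ℂ)) := by
  subst hcard
  have he := isMatrixUnits_completeGraphUnits x (by omega)
  exact ⟨((AlgEquiv.ofInjective _ (injective_toAlgHom_completeGraphUnits x hr he)).trans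
    (Subalgebra.equivOfEq _ _ (range_toAlgHom_completeGraphUnits x (by omega) he))).symm⟩
end

section
/- Let X be a finite set with |X| = r where r ≥ 3, and fix x ∈ X. Then the five matrices I, E₀, E₀*, E₀E₀*, E₀*E₀ are linearly independent over ℂ and span the subconstituent algebra T of K_r with respect to x; that is, they form a basis for T. -/
/-- The 0-th primitive idempotent `E₀ = r⁻¹ J` of the complete graph `K_r`. -/
noncomputable def E0 (X : Type*) (r : ℕ) : Matrix X X ℂ := (r : ℂ)⁻¹ • Jmat X

set_option linter.unusedSectionVars false
set_option maxHeartbeats 1000000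
section aux
variable (X : Type*) [Fintype X] [DecidableEq X] (r : ℕ) (x : X)

lemma hE_apply (y z : X) : E0 X r y z = (r : ℂ)⁻¹ := by
  simp [E0, Jmat]

lemma hF_apply (y z : X) : E0s X x y z = if y = z ∧ y = x then 1 else 0 := by
  simp [E0s, Matrix.diagonal_apply, ite_and]

lemma hEF_apply (y z : X) : (E0 X r * E0s X x) y z = if z = x then (r : ℂ)⁻¹ else 0 := by
  simp [E0, E0s, Jmat, Matrix.mul_apply, Matrix.diagonal_apply, Finset.mul_sum]

lemma hFE_apply (y z : X) : (E0s X x * E0 X r) y z = if y = x then (r : ℂ)⁻¹ else 0 := by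
  simp [E0, E0s, Jmat, Matrix.mul_apply, Matrix.diagonal_apply, Finset.mul_sum]

lemma hEE (hcard : Fintype.card X = r) (hr0 : (r : ℂ) ≠ 0) :
    E0 X r * E0 X r = E0 X r := by
  ext y z
  simp [E0, Jmat, Matrix.mul_apply, Finset.sum_const, hcard]
  field_simp

lemma hFF : E0s X x * E0s X x = E0s X x := by
  ext y z
  rw [Matrix.mul_apply]
  simp only [hF_apply, ite_and]
  by_cases hy : y = z <;> by_cases hx' : y = x <;>
    simp [hy, hx', Finset.sum_ite_eq', ite_and] <;> aesop

lemma hEFE : E0 X r * E0s X x * E0 X r = (r : ℂ)⁻¹ • E0 X r := by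
  ext y z
  rw [Matrix.mul_apply]
  simp only [hEF_apply, hE_apply, Matrix.smul_apply, smul_eq_mul,
    ite_mul, zero_mul, Finset.sum_ite_eq', Finset.mem_univ, if_true]

lemma hFEF : E0s X x * E0 X r * E0s X x = (r : ℂ)⁻¹ • E0s X x := by
  ext y z
  rw [Matrix.mul_apply]
  simp only [hFE_apply, hF_apply, Matrix.smul_apply, smul_eq_mul,
    mul_ite, mul_zero, mul_one, ite_mul, zero_mul, Finset.sum_ite_eq', Finset.mem_univ,
    if_true, ite_and]
  by_cases hy : y = x <;> by_cases hz : z = x <;> simp [hy, hz] <;> aesop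

end aux

theorem stmt4 (X : Type*) [Fintype X] [DecidableEq X] (r : ℕ) (hr : 3 ≤ r)
    (hcard : Fintype.card X = r) (x : X) :
    LinearIndependent ℂ
      ![(1 : Matrix X X ℂ), E0 X r, E0s X x, E0 X r * E0s X x, E0s X x * E0 X r] ∧
    Submodule.span ℂ
      ({1, E0 X r, E0s X x, E0 X r * E0s X x, E0s X x * E0 X r} : Set (Matrix X X ℂ)) =
      Subalgebra.toSubmodule
        (Algebra.adjoin ℂ ({Amat X, AmatStar X r x} : Set (Matrix X X ℂ))) := by
  have hr0 : (r : ℂ) ≠ 0 := by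
    exact_mod_cast Nat.cast_ne_zero.2 (by omega)
  set E := E0 X r with hE
  set F := E0s X x with hF
  -- basic identities
  have h1 : E * E = E := hEE X r hcard hr0
  have h2 : F * F = F := hFF X x
  have h3 : E * F * E = (r : ℂ)⁻¹ • E := hEFE X r x
  have h4 : F * E * F = (r : ℂ)⁻¹ • F := hFEF X r x
  have d1 : E * (E * F) = E * F := by rw [← mul_assoc, h1]
  have d2 : E * (F * E) = (r : ℂ)⁻¹ • E := by rw [← mul_assoc, h3]
  have d3 : F * (E * F) = (r : ℂ)⁻¹ • F := by rw [← mul_assoc, h4]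
  have d4 : F * (F * E) = F * E := by rw [← mul_assoc, h2]
  have d5 : (E * F) * E = (r : ℂ)⁻¹ • E := h3
  have d6 : (E * F) * F = E * F := by rw [mul_assoc, h2]
  have d7 : (F * E) * E = F * E := by rw [mul_assoc, h1]
  have d8 : (F * E) * F = (r : ℂ)⁻¹ • F := h4
  have d9 : (E * F) * (E * F) = (r : ℂ)⁻¹ • (E * F) := by
    rw [mul_assoc, d3, Matrix.mul_smul]
  have d10 : (E * F) * (F * E) = (r : ℂ)⁻¹ • E := by rw [mul_assoc, d4, d2]
  have d11 : (F * E) * (E * F) = (r : ℂ)⁻¹ • F := by rw [mul_assoc, d1, d3]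
  have d12 : (F * E) * (F * E) = (r : ℂ)⁻¹ • (F * E) := by
    rw [mul_assoc, d2, Matrix.mul_smul]
  set s : Set (Matrix X X ℂ) := {1, E, F, E * F, F * E} with hs
  set p : Submodule ℂ (Matrix X X ℂ) := Submodule.span ℂ s with hp
  have mem1 : (1 : Matrix X X ℂ) ∈ p := Submodule.subset_span (by simp [hs])
  have memE : E ∈ p := Submodule.subset_span (by simp [hs])
  have memF : F ∈ p := Submodule.subset_span (by simp [hs])
  have memEF : E * F ∈ p := Submodule.subset_span (by simp [hs])
  have memFE : F * E ∈ p := Submodule.subset_span (by simp [hs])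
  -- closure under multiplication
  have key : ∀ a ∈ s, ∀ b ∈ s, a * b ∈ p := by
    intro a ha b hb
    simp only [hs, Set.mem_insert_iff, Set.mem_singleton_iff] at ha hb
    rcases ha with rfl | rfl | rfl | rfl | rfl <;>
      rcases hb with rfl | rfl | rfl | rfl | rfl <;>
      (try simp only [one_mul, mul_one, h1, h2, d1, d2, d3, d4, d5, d6, d7, d8, d9, d10, d11, d12]) <;>
      first
        | exact mem1 | exact memE | exact memF | exact memEF | exact memFE
        | exact Submodule.smul_mem _ _ memE
        | exact Submodule.smul_mem _ _ memF
        | exact Submodule.smul_mem _ _ memEF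
        | exact Submodule.smul_mem _ _ memFE
  have hmulp : ∀ m n : Matrix X X ℂ, m ∈ p → n ∈ p → m * n ∈ p := by
    have hle : p * p ≤ p := by
      rw [hp, Submodule.span_mul_span]
      refine Submodule.span_le.2 ?_
      rintro c hc
      rw [Set.mem_mul] at hc
      obtain ⟨a, ha, b, hb, rfl⟩ := hc
      exact key a ha b hb
    intro m n hm hn
    exact Submodule.mul_le.1 hle m hm n hn
  -- the subalgebra structure on p
  let S : Subalgebra ℂ (Matrix X X ℂ) := Submodule.toSubalgebra p mem1 hmulp
  -- adjoin membership of generators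
  set T' := Algebra.adjoin ℂ ({Amat X, AmatStar X r x} : Set (Matrix X X ℂ)) with hT
  have hA : Amat X ∈ T' := Algebra.subset_adjoin (by simp)
  have hAs : AmatStar X r x ∈ T' := Algebra.subset_adjoin (by simp)
  have hJmem : Jmat X ∈ T' := by
    have : Amat X + 1 = Jmat X := by rw [Amat, sub_add_cancel]
    rw [← this]; exact add_mem hA (one_mem _)
  have hEmem : E ∈ T' := by
    rw [hE, E0]; exact Subalgebra.smul_mem _ hJmem _
  have hFmem : F ∈ T' := by
    have : ((r : ℂ))⁻¹ • (AmatStar X r x + 1) = F := by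
      rw [AmatStar, sub_add_cancel, smul_smul, inv_mul_cancel₀ hr0, one_smul, hF]
    rw [← this]
    exact Subalgebra.smul_mem _ (add_mem hAs (one_mem _)) _
  constructor
  · -- linear independence
    rw [Fintype.linearIndependent_iff]
    intro g hg
    simp only [Fin.sum_univ_five, Matrix.cons_val_zero, Matrix.cons_val_one, Matrix.head_cons,
      Matrix.cons_val_two, Matrix.tail_cons, Matrix.cons_val_three, Matrix.cons_val_four,
      Matrix.head_fin_const] at hg
    have H : ∀ y z : X,
        g 0 * (1 : Matrix X X ℂ) y z + g 1 * E y z + g 2 * F y z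
          + g 3 * (E * F) y z + g 4 * (F * E) y z = 0 := by
      intro y z
      have := congrFun (congrFun hg y) z
      simpa [Matrix.add_apply, Matrix.smul_apply, smul_eq_mul] using this
    -- pick two points different from x and from each other
    obtain ⟨y, hyx⟩ := Fintype.exists_ne_of_one_lt_card (by omega) x
    have hy1 : y ∈ Finset.univ.erase x := Finset.mem_erase.2 ⟨hyx, Finset.mem_univ y⟩
    have hcard2 : 1 < (Finset.univ.erase x).card := by
      rw [Finset.card_erase_of_mem (Finset.mem_univ x), Finset.card_univ, hcard]; omega
    obtain ⟨z, hz1, hzy⟩ := Finset.exists_mem_ne hcard2 y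
    have hzx : z ≠ x := (Finset.mem_erase.1 hz1).1
    have hinv : (r : ℂ)⁻¹ ≠ 0 := inv_ne_zero hr0
    have Hyz := H y z
    have Hyx := H y x
    have Hxz := H x z
    have Hyy := H y y
    have Hxx := H x x
    simp [Matrix.one_apply, hE, hF, hE_apply, hF_apply, hEF_apply, hFE_apply,
      hyx, hzx, hzy, Ne.symm hyx, Ne.symm hzx, Ne.symm hzy] at Hyz Hyx Hxz Hyy Hxx
    have hrn : r ≠ 0 := by omega
    have hg1 : g 1 = 0 := Hyz.resolve_right hrn
    have hg3 : g 3 = 0 := by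
      rw [hg1, zero_mul, zero_add] at Hyx
      exact (mul_eq_zero.1 Hyx).resolve_right hinv
    have hg4 : g 4 = 0 := by
      rw [hg1, zero_mul, zero_add] at Hxz
      exact (mul_eq_zero.1 Hxz).resolve_right hinv
    have hg0 : g 0 = 0 := by rw [hg1, zero_mul, add_zero] at Hyy; exact Hyy
    have hg2 : g 2 = 0 := by
      rw [hg0, hg1, hg3, hg4] at Hxx
      simpa using Hxx
    intro i
    fin_cases i <;> assumption
  · -- span = adjoin
    apply le_antisymm
    · refine Submodule.span_le.2 ?_
      rintro c hc
      simp only [hs, Set.mem_insert_iff, Set.mem_singleton_iff] at hc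
      rcases hc with rfl | rfl | rfl | rfl | rfl
      · exact one_mem T'
      · exact hEmem
      · exact hFmem
      · exact T'.mul_mem hEmem hFmem
      · exact T'.mul_mem hFmem hEmem
    · intro m hm
      have hsub : ({Amat X, AmatStar X r x} : Set (Matrix X X ℂ)) ⊆ ↑S := by
        rintro c hc
        simp only [Set.mem_insert_iff, Set.mem_singleton_iff] at hc
        rcases hc with rfl | rfl
        · have hA' : (r : ℂ) • E - 1 = Amat X := by
            rw [hE, E0, smul_smul, mul_inv_cancel₀ hr0, one_smul, Amat]
          show Amat X ∈ p
          rw [← hA']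
          exact sub_mem (Submodule.smul_mem _ _ memE) mem1
        · show AmatStar X r x ∈ p
          rw [AmatStar, ← hF]
          exact sub_mem (Submodule.smul_mem _ _ memF) mem1
      exact Algebra.adjoin_le hsub hm
end

section
/- Let X be a finite set with |X| = r where r ≥ 3, and fix x ∈ X. Define e₀ = (r/(r−1))·(E₀ + E₀* − E₀E₀* − E₀*E₀). Then e₀² = e₀, e₀ is real symmetric (e₀ᵗ = e₀ and e₀ has real entries), and the column space (range) of e₀ equals span{x̂, 𝟙}; that is, e₀ is the orthogonal projection of ℂ^X onto span{x̂, 𝟙}. -/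
open Matrix

/-- `e₀ = (r/(r−1))·(E₀ + E₀* − E₀E₀* − E₀*E₀)`. -/
noncomputable def e0 (X : Type*) [Fintype X] [DecidableEq X] (r : ℕ) (x : X) : Matrix X X ℂ :=
  ((r : ℂ) / ((r : ℂ) - 1)) • (E0 X r + E0s X x - E0 X r * E0s X x - E0s X x * E0 X r)

/-- The vector `x̂` with a one in coordinate `x` and zeros elsewhere. -/
def xhat (X : Type*) [DecidableEq X] (x : X) : X → ℂ := fun y => if y = x then 1 else 0

/-- The all-ones vector `𝟙`. -/
def allOne (X : Type*) : X → ℂ := fun _ => 1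

lemma e0_apply (X : Type*) [Fintype X] [DecidableEq X] (r : ℕ) (x y z : X) :
    e0 X r x y z = ((r : ℂ) / ((r : ℂ) - 1)) *
      ((r : ℂ)⁻¹ + (if y = x then 1 else 0) * (if z = x then 1 else 0)
        - (if z = x then 1 else 0) * (r : ℂ)⁻¹ - (if y = x then 1 else 0) * (r : ℂ)⁻¹) := by
  simp [e0, E0, E0s, Jmat, Matrix.mul_apply, Matrix.diagonal, Matrix.smul_apply,
    Finset.mul_sum, mul_ite, ite_mul, Finset.sum_ite_eq, Finset.sum_ite_eq']
  left
  by_cases hy : y = x <;> by_cases hz : z = x <;> subst_vars <;> simp_all [eq_comm]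

lemma sum_chi (X : Type*) [Fintype X] [DecidableEq X] (x : X) (p q : ℂ) :
    ∑ w : X, (if w = x then p else q) = p + ((Fintype.card X : ℂ) - 1) * q := by
  have h : ∀ w : X, (if w = x then p else q) = q + (if w = x then p - q else 0) := by
    intro w; split_ifs <;> ring
  simp only [h, Finset.sum_add_distrib, Finset.sum_const, Finset.sum_ite_eq',
    Finset.mem_univ, if_true, smul_eq_mul, Finset.card_univ]
  ring

theorem stmt7 (X : Type*) [Fintype X] [DecidableEq X] (r : ℕ) (hr : 3 ≤ r)
    (hcard : Fintype.card X = r) (x : X) :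
    e0 X r x * e0 X r x = e0 X r x ∧
    (e0 X r x)ᵀ = e0 X r x ∧
    (∀ y z : X, (e0 X r x y z).im = 0) ∧
    LinearMap.range (Matrix.mulVecLin (e0 X r x)) =
      Submodule.span ℂ ({xhat X x, allOne X} : Set (X → ℂ)) := by
  have hr0 : (r : ℂ) ≠ 0 := by
    exact_mod_cast Nat.cast_ne_zero.mpr (by omega : r ≠ 0)
  have hr1' : (-1 : ℂ) + (r : ℂ) ≠ 0 := by
    have : (r : ℂ) ≠ 1 := by
      exact_mod_cast (by exact_mod_cast (by omega : r ≠ 1) : (r : ℂ) ≠ (1 : ℕ))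
    intro h; apply this; linear_combination h
  have hr1 : (r : ℂ) - 1 ≠ 0 := by
    have : (r : ℂ) ≠ 1 := by
      exact_mod_cast (by exact_mod_cast (by omega : r ≠ 1) : (r : ℂ) ≠ (1 : ℕ))
    exact sub_ne_zero.mpr this
  set c : ℂ := (r : ℂ) / ((r : ℂ) - 1) with hc
  refine ⟨?_, ?_, ?_, ?_⟩
  · -- idempotence
    ext y z
    rw [Matrix.mul_apply]
    set a : ℂ := (if y = x then (1:ℂ) else 0) with ha
    set b : ℂ := (if z = x then (1:ℂ) else 0) with hb
    have hw : ∀ w : X, e0 X r x y w * e0 X r x w z =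
        (if w = x then
          (c * ((r : ℂ)⁻¹ + a - (r : ℂ)⁻¹ - a * (r : ℂ)⁻¹)) *
            (c * ((r : ℂ)⁻¹ + b - b * (r : ℂ)⁻¹ - (r : ℂ)⁻¹))
        else
          (c * ((r : ℂ)⁻¹ - a * (r : ℂ)⁻¹)) * (c * ((r : ℂ)⁻¹ - b * (r : ℂ)⁻¹))) := by
      intro w
      rw [e0_apply, e0_apply, ← ha, ← hb, ← hc]
      split_ifs <;> ring
    rw [Finset.sum_congr rfl (fun w _ => hw w), sum_chi, hcard, e0_apply, ← ha, ← hb, ← hc]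
    have hab : (a = 1 ∧ b = 1) ∨ (a = 1 ∧ b = 0) ∨ (a = 0 ∧ b = 1) ∨ (a = 0 ∧ b = 0) := by
      rw [ha, hb]; split_ifs <;> simp
    rcases hab with ⟨h1, h2⟩ | ⟨h1, h2⟩ | ⟨h1, h2⟩ | ⟨h1, h2⟩ <;> rw [h1, h2, hc] <;>
      field_simp <;> ring
  · -- symmetric
    ext y z
    rw [Matrix.transpose_apply, e0_apply, e0_apply]
    ring
  · -- real entries
    intro y z
    rw [e0_apply]
    have hcast : (r : ℂ) = ((r : ℝ) : ℂ) := by push_cast; ring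
    rw [hcast]
    split_ifs <;>
      simp only [mul_one, mul_zero, one_mul, zero_mul, add_zero, sub_zero, ←
        Complex.ofReal_one, ← Complex.ofReal_inv, ← Complex.ofReal_sub, ← Complex.ofReal_add,
        ← Complex.ofReal_div, ← Complex.ofReal_mul, ← Complex.ofReal_zero, Complex.ofReal_im]
  · -- range
    have key : ∀ v : X → ℂ, e0 X r x *ᵥ v =
        (c * ((∑ z, v z) - v x) / r) • allOne X +
          (c * v x - c * (∑ z, v z) / r) • xhat X x := by
      intro v
      funext y
      rw [Matrix.mulVec]
      set a : ℂ := (if y = x then (1:ℂ) else 0) with ha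
      have hz : ∀ z : X, e0 X r x y z * v z =
          (c * ((r : ℂ)⁻¹ - a * (r : ℂ)⁻¹)) * v z +
            (if z = x then (c * (a - (r : ℂ)⁻¹)) * v z else 0) := by
        intro z
        rw [e0_apply, ← ha, ← hc]
        split_ifs <;> ring
      rw [dotProduct, Finset.sum_congr rfl (fun z _ => hz z),
        Finset.sum_add_distrib, ← Finset.mul_sum]
      simp only [Finset.sum_ite_eq', Finset.mem_univ, if_true]
      simp only [Pi.add_apply, Pi.smul_apply, allOne, xhat, ← ha, smul_eq_mul]
      ring
    apply le_antisymm
    · rintro u ⟨v, rfl⟩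
      rw [Matrix.mulVecLin_apply, key v]
      exact Submodule.add_mem _
        (Submodule.smul_mem _ _ (Submodule.subset_span (by simp)))
        (Submodule.smul_mem _ _ (Submodule.subset_span (by simp)))
    · rw [Submodule.span_le]
      rintro u (rfl | rfl)
      · refine ⟨xhat X x, ?_⟩
        rw [Matrix.mulVecLin_apply, key]
        simp only [xhat, Finset.sum_ite_eq', Finset.mem_univ, if_true, if_pos rfl]
        funext y
        simp only [Pi.add_apply, Pi.smul_apply, allOne, smul_eq_mul]
        by_cases hy : y = x <;> simp [xhat, hy, hc] <;> field_simp <;> ring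
      · refine ⟨allOne X, ?_⟩
        rw [Matrix.mulVecLin_apply, key]
        simp only [allOne, Finset.sum_const, Finset.card_univ, hcard, nsmul_eq_mul, mul_one]
        funext y
        simp only [Pi.add_apply, Pi.smul_apply, smul_eq_mul, xhat]
        by_cases hy : y = x <;> simp [hy, allOne, hc] <;> field_simp <;> ring
end

section
/- Let X be a finite set with |X| = r where r ≥ 3, and fix x ∈ X. Then A and A* are invertible, and the matrix C = A⁻¹A*⁻¹AA* satisfies: C x̂ = (1−r)·x̂; C 𝟙 = (1−r)⁻¹·𝟙; and C v = v for every v ∈ ℂ^X with v(x) = 0 and Σ_{y ∈ X} v(y) = 0. In particular, C is diagonalizable with eigenvalues 1−r, (1−r)⁻¹, and 1, whose eigenspaces are span{x̂}, span{𝟙}, and {v : v(x) = 0, Σ_y v(y) = 0}, respectively. -/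
/-- The group commutator `C = A⁻¹ A*⁻¹ A A*`. -/
noncomputable def Cmat (X : Type*) [Fintype X] [DecidableEq X] (r : ℕ) (x : X) :
    Matrix X X ℂ :=
  (Amat X)⁻¹ * (AmatStar X r x)⁻¹ * Amat X * AmatStar X r x

/-!
Instead of inverting `A` and `A*`, use that `C v = μ v` as soon as `A A* v = μ A* A v`. With
`A v = (Σ v) 𝟙 - v` and `A* v = r v(x) x̂ - v` this is checked directly on `x̂`, on `𝟙` and on
the vectors `w` with `w(x) = 0`, `Σ w = 0`. These three subspaces span `ℂ^X` and the three
eigenvalues are pairwise distinct for `r ≥ 3`, so, eigenspaces of distinct eigenvalues being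
independent, each eigenspace is exactly the corresponding subspace. `A` and `A*` are invertible
because their kernels are trivial.
-/

open Matrix

theorem Module.End.eigenspace_eq_of_sup_eq_top {K V : Type*} [Field K] [AddCommGroup V]
    [Module K V] (f : Module.End K V) {μ₁ μ₂ μ₃ : K} {U₁ U₂ U₃ : Submodule K V}
    (h₁ : U₁ ≤ f.eigenspace μ₁) (h₂ : U₂ ≤ f.eigenspace μ₂) (h₃ : U₃ ≤ f.eigenspace μ₃)
    (h₁₂ : μ₁ ≠ μ₂) (h₁₃ : μ₁ ≠ μ₃) (htop : U₁ ⊔ U₂ ⊔ U₃ = ⊤) :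
    f.eigenspace μ₁ = U₁ := by
  have hdisj : Disjoint (f.eigenspace μ₁) (f.eigenspace μ₂ ⊔ f.eigenspace μ₃) := by
    simpa only [iSup_pair] using
      f.eigenspaces_iSupIndep.disjoint_biSup (y := {μ₂, μ₃}) (by simp [h₁₂, h₁₃])
  refine le_antisymm (fun v hv => ?_) h₁
  have hv' : v ∈ U₁ ⊔ U₂ ⊔ U₃ := htop ▸ Submodule.mem_top
  obtain ⟨u, hu, u₃, hu₃, rfl⟩ := Submodule.mem_sup.1 hv'
  obtain ⟨u₁, hu₁, u₂, hu₂, rfl⟩ := Submodule.mem_sup.1 hu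
  have h0 : u₂ + u₃ = 0 := (Submodule.disjoint_def.1 hdisj) _
    (by convert sub_mem hv (h₁ hu₁) using 1; abel) (Submodule.add_mem_sup (h₂ hu₂) (h₃ hu₃))
  simpa [add_assoc, h0] using hu₁

theorem Matrix.inv_mul_inv_mul_mul_mulVec_eq_smul {n K : Type*} [Fintype n] [DecidableEq n]
    [Field K] {A B : Matrix n n K} (hA : IsUnit A) (hB : IsUnit B) {μ : K} {v : n → K}
    (h : (A * B) *ᵥ v = μ • (B * A) *ᵥ v) : (A⁻¹ * B⁻¹ * A * B) *ᵥ v = μ • v := by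
  have hBA : A⁻¹ * B⁻¹ * (B * A) = 1 := by
    rw [Matrix.mul_assoc, ← Matrix.mul_assoc B⁻¹, nonsing_inv_mul _ (B.isUnit_iff_isUnit_det.1 hB),
      Matrix.one_mul, nonsing_inv_mul _ (A.isUnit_iff_isUnit_det.1 hA)]
  calc (A⁻¹ * B⁻¹ * A * B) *ᵥ v = (A⁻¹ * B⁻¹) *ᵥ ((A * B) *ᵥ v) := by
        simp only [mulVec_mulVec, Matrix.mul_assoc]
    _ = μ • v := by rw [h, mulVec_smul, mulVec_mulVec, hBA, one_mulVec]

theorem Matrix.setOf_mulVec_eq_smul {n K : Type*} [Fintype n] [DecidableEq n] [Field K]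
    (M : Matrix n n K) (μ : K) :
    {v | M *ᵥ v = μ • v} = (Module.End.eigenspace (toLin' M) μ : Set (n → K)) := by
  ext v; simp

theorem Matrix.span_singleton_le_eigenspace_toLin' {n K : Type*} [Fintype n] [DecidableEq n]
    [Field K] {M : Matrix n n K} {μ : K} {v : n → K} (h : M *ᵥ v = μ • v) :
    Submodule.span K {v} ≤ Module.End.eigenspace (toLin' M) μ := by
  simpa [Submodule.span_singleton_le_iff_mem, Module.End.mem_eigenspace_iff] using h

theorem one_sub_ne_inv_one_sub {K : Type*} [Field K] {a : K} (h0 : a ≠ 0) (h1 : a ≠ 1)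
    (h2 : a ≠ 2) : 1 - a ≠ (1 - a)⁻¹ := fun h => by
  have h' := mul_inv_cancel₀ (sub_ne_zero.2 h1.symm)
  rw [← h] at h'
  exact mul_ne_zero h0 (sub_ne_zero.2 h2) (by linear_combination h')

def vanishingZeroSum {X : Type*} [Fintype X] (R : Type*) [CommSemiring R] (x : X) :
    Submodule R (X → R) where
  carrier := {v | v x = 0 ∧ ∑ y, v y = 0}
  add_mem' {v w} hv hw := by simp [Finset.sum_add_distrib, hv.1, hv.2, hw.1, hw.2]
  zero_mem' := by simp
  smul_mem' c v hv := by simp [← Finset.mul_sum, hv.1, hv.2]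

section CompleteGraph

variable {X : Type*} [Fintype X] [DecidableEq X] {r : ℕ} {x : X}

theorem sum_xhat : ∑ y, xhat X x y = 1 := by simp [xhat]

omit [DecidableEq X] in
theorem sum_allOne (hcard : Fintype.card X = r) : ∑ y, allOne X y = r := by
  simp [allOne, hcard]

theorem Amat_mulVec (v : X → ℂ) : Amat X *ᵥ v = (∑ y, v y) • allOne X - v := by
  rw [Amat, sub_mulVec, one_mulVec]
  ext y; simp [Jmat, allOne, mulVec, dotProduct]

theorem AmatStar_mulVec (v : X → ℂ) : AmatStar X r x *ᵥ v = (r * v x) • xhat X x - v := by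
  rw [AmatStar, sub_mulVec, one_mulVec, smul_mulVec, E0s]
  ext y; by_cases h : y = x <;> simp [mulVec_diagonal, xhat, h]

theorem Amat_mulVec_xhat : Amat X *ᵥ xhat X x = allOne X - xhat X x := by
  rw [Amat_mulVec, sum_xhat, one_smul]

theorem Amat_mulVec_allOne (hcard : Fintype.card X = r) :
    Amat X *ᵥ allOne X = (r : ℂ) • allOne X - allOne X := by
  rw [Amat_mulVec, sum_allOne hcard]

theorem AmatStar_mulVec_xhat : AmatStar X r x *ᵥ xhat X x = (r : ℂ) • xhat X x - xhat X x := by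
  simp [AmatStar_mulVec, xhat]

theorem AmatStar_mulVec_allOne : AmatStar X r x *ᵥ allOne X = (r : ℂ) • xhat X x - allOne X := by
  simp [AmatStar_mulVec, allOne]

theorem Amat_mulVec_of_mem {v : X → ℂ} (hv : v ∈ vanishingZeroSum ℂ x) : Amat X *ᵥ v = -v := by
  rw [Amat_mulVec, hv.2, zero_smul, zero_sub]

theorem AmatStar_mulVec_of_mem {v : X → ℂ} (hv : v ∈ vanishingZeroSum ℂ x) :
    AmatStar X r x *ᵥ v = -v := by
  rw [AmatStar_mulVec, hv.1, mul_zero, zero_smul, zero_sub]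

theorem isUnit_Amat (hr : (r : ℂ) ≠ 1) (hcard : Fintype.card X = r) : IsUnit (Amat X) := by
  refine mulVec_injective_iff_isUnit.1 fun v w h => sub_eq_zero.1 ?_
  have hu : (∑ y, (v - w) y) • allOne X = v - w := by
    rw [← sub_eq_zero, ← Amat_mulVec, mulVec_sub, h, sub_self]
  have hsum : ∑ y, (v - w) y = 0 := by
    have := congrArg (fun u => ∑ y, u y) hu
    simp only [Pi.smul_apply, ← Finset.mul_sum, sum_allOne hcard, smul_eq_mul] at this
    exact eq_zero_of_mul_eq_self_right hr this
  rw [← hu, hsum, zero_smul]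

theorem isUnit_AmatStar (hr : (r : ℂ) ≠ 1) : IsUnit (AmatStar X r x) := by
  refine mulVec_injective_iff_isUnit.1 fun v w h => sub_eq_zero.1 ?_
  have hu : (r * (v - w) x) • xhat X x = v - w := by
    rw [← sub_eq_zero, ← AmatStar_mulVec, mulVec_sub, h, sub_self]
  have hx : (v - w) x = 0 := by
    have := congrFun hu x
    simp only [Pi.smul_apply, xhat, if_pos, smul_eq_mul, mul_one] at this
    exact eq_zero_of_mul_eq_self_left hr this
  rw [← hu, hx, mul_zero, zero_smul]

theorem Cmat_mulVec_xhat (hA : IsUnit (Amat X)) (hAs : IsUnit (AmatStar X r x)) :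
    Cmat X r x *ᵥ xhat X x = (1 - (r : ℂ)) • xhat X x := by
  refine inv_mul_inv_mul_mul_mulVec_eq_smul hA hAs ?_
  rw [← mulVec_mulVec, ← mulVec_mulVec, AmatStar_mulVec_xhat, Amat_mulVec_xhat, mulVec_sub,
    mulVec_smul, Amat_mulVec_xhat, mulVec_sub, AmatStar_mulVec_allOne, AmatStar_mulVec_xhat]
  module

theorem Cmat_mulVec_allOne (hr : (r : ℂ) ≠ 1) (hcard : Fintype.card X = r)
    (hA : IsUnit (Amat X)) (hAs : IsUnit (AmatStar X r x)) :
    Cmat X r x *ᵥ allOne X = (1 - (r : ℂ))⁻¹ • allOne X := by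
  refine inv_mul_inv_mul_mul_mulVec_eq_smul hA hAs ?_
  have h : (1 - (r : ℂ))⁻¹ * (1 - r) = 1 := inv_mul_cancel₀ (sub_ne_zero.2 hr.symm)
  rw [← mulVec_mulVec, ← mulVec_mulVec, AmatStar_mulVec_allOne, Amat_mulVec_allOne hcard,
    mulVec_sub, mulVec_smul, Amat_mulVec_xhat, Amat_mulVec_allOne hcard, mulVec_sub,
    mulVec_smul, AmatStar_mulVec_allOne]
  linear_combination (norm := module) h • ((r : ℂ) • xhat X x - allOne X)

theorem Cmat_mulVec_of_mem (hA : IsUnit (Amat X)) (hAs : IsUnit (AmatStar X r x))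
    {v : X → ℂ} (hv : v ∈ vanishingZeroSum ℂ x) : Cmat X r x *ᵥ v = v := by
  nth_rw 2 [← one_smul ℂ v]
  refine inv_mul_inv_mul_mul_mulVec_eq_smul hA hAs ?_
  rw [one_smul, ← mulVec_mulVec, ← mulVec_mulVec, AmatStar_mulVec_of_mem hv,
    Amat_mulVec_of_mem hv, mulVec_neg, mulVec_neg, Amat_mulVec_of_mem hv,
    AmatStar_mulVec_of_mem hv]

theorem span_xhat_sup_span_allOne_sup_vanishingZeroSum (hr : (r : ℂ) ≠ 1)
    (hcard : Fintype.card X = r) :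
    Submodule.span ℂ {xhat X x} ⊔ Submodule.span ℂ {allOne X} ⊔ vanishingZeroSum ℂ x = ⊤ := by
  refine Submodule.eq_top_iff'.2 fun v => ?_
  -- the coefficients of `x̂` and `𝟙` are forced by evaluating at `x` and summing
  set b := (∑ y, v y - v x) / (r - 1)
  set a := v x - b
  have hw : v - a • xhat X x - b • allOne X ∈ vanishingZeroSum ℂ x := by
    constructor
    · simp [a, xhat, allOne]
    · simp only [Pi.sub_apply, Pi.smul_apply, smul_eq_mul, Finset.sum_sub_distrib,
        ← Finset.mul_sum, sum_xhat, sum_allOne hcard, a, b]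
      field_simp [sub_ne_zero.2 hr]
      ring
  rw [show v = a • xhat X x + b • allOne X + (v - a • xhat X x - b • allOne X) by abel]
  exact Submodule.add_mem_sup (Submodule.add_mem_sup
    (Submodule.smul_mem _ a (Submodule.mem_span_singleton_self _))
    (Submodule.smul_mem _ b (Submodule.mem_span_singleton_self _))) hw

end CompleteGraph

theorem stmt13 (X : Type*) [Fintype X] [DecidableEq X] (r : ℕ) (hr : 3 ≤ r)
    (hcard : Fintype.card X = r) (x : X) :
    IsUnit (Amat X) ∧ IsUnit (AmatStar X r x) ∧
    (Cmat X r x).mulVec (xhat X x) = (1 - (r : ℂ)) • xhat X x ∧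
    (Cmat X r x).mulVec (allOne X) = (1 - (r : ℂ))⁻¹ • allOne X ∧
    (∀ v : X → ℂ, v x = 0 → ∑ y : X, v y = 0 → (Cmat X r x).mulVec v = v) ∧
    -- the eigenspaces of `C` for the eigenvalues `1−r`, `(1−r)⁻¹`, `1` are exactly
    -- `span{x̂}`, `span{𝟙}`, and `{v : v(x) = 0, Σ_y v(y) = 0}`, respectively:
    {v : X → ℂ | (Cmat X r x).mulVec v = (1 - (r : ℂ)) • v} =
      (Submodule.span ℂ ({xhat X x} : Set (X → ℂ)) : Set (X → ℂ)) ∧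
    {v : X → ℂ | (Cmat X r x).mulVec v = (1 - (r : ℂ))⁻¹ • v} =
      (Submodule.span ℂ ({allOne X} : Set (X → ℂ)) : Set (X → ℂ)) ∧
    {v : X → ℂ | (Cmat X r x).mulVec v = v} =
      {v : X → ℂ | v x = 0 ∧ ∑ y : X, v y = 0} := by
  have hr0 : (r : ℂ) ≠ 0 := by exact_mod_cast (by omega : r ≠ 0)
  have hr1 : (r : ℂ) ≠ 1 := by exact_mod_cast (by omega : r ≠ 1)
  have hr2 : (r : ℂ) ≠ 2 := by exact_mod_cast (by omega : r ≠ 2)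
  have hA := isUnit_Amat hr1 hcard
  have hAs := isUnit_AmatStar (x := x) hr1
  have hxhat := Cmat_mulVec_xhat hA hAs
  have hallOne := Cmat_mulVec_allOne hr1 hcard hA hAs
  have hW : ∀ v ∈ vanishingZeroSum ℂ x, Cmat X r x *ᵥ v = v :=
    fun _ => Cmat_mulVec_of_mem hA hAs
  set f : Module.End ℂ (X → ℂ) := toLin' (Cmat X r x)
  have h₁ := span_singleton_le_eigenspace_toLin' hxhat
  have h₂ := span_singleton_le_eigenspace_toLin' hallOne
  have h₃ : vanishingZeroSum ℂ x ≤ f.eigenspace 1 := fun v hv =>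
    Module.End.mem_eigenspace_iff.2 (by simpa [f] using hW v hv)
  have htop := span_xhat_sup_span_allOne_sup_vanishingZeroSum (x := x) hr1 hcard
  have h₁₂ := one_sub_ne_inv_one_sub hr0 hr1 hr2
  have h₁₃ : 1 - (r : ℂ) ≠ 1 := by simpa using hr0
  have h₂₃ : (1 - (r : ℂ))⁻¹ ≠ 1 := inv_ne_one.2 h₁₃
  refine ⟨hA, hAs, hxhat, hallOne, fun v hvx hvs => hW v ⟨hvx, hvs⟩, ?_, ?_, ?_⟩
  · rw [setOf_mulVec_eq_smul, f.eigenspace_eq_of_sup_eq_top h₁ h₂ h₃ h₁₂ h₁₃ htop]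
  · rw [setOf_mulVec_eq_smul, f.eigenspace_eq_of_sup_eq_top h₂ h₁ h₃ h₁₂.symm h₂₃
      (by rw [← htop, sup_comm (Submodule.span ℂ _)])]
  · have h := setOf_mulVec_eq_smul (Cmat X r x) 1
    simp only [one_smul] at h
    rw [h, f.eigenspace_eq_of_sup_eq_top h₃ h₁ h₂ h₁₃.symm h₂₃.symm (by rw [← htop]; ac_rfl)]
    rfl
end

section
/- Fix integers D ≥ 1 and r ≥ 3, and let C = 𝔸_D⁻¹𝔸_D*⁻¹𝔸_D𝔸_D*. Then the product Π_{s=−D}^{D} (C − (1−r)^s·I) over all integers s with −D ≤ s ≤ D equals the zero matrix. Since the 2D+1 scalars (1−r)^s (−D ≤ s ≤ D) are pairwise distinct, C is diagonalizable and every eigenvalue of C is of the form (1−r)^s for some integer s with −D ≤ s ≤ D. -/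
/-- The `D`-th distance matrix `𝔸_D` of the Hamming graph `H(D,r)`:
the `(u,v)`-entry is `1` if `u` and `v` differ in all `D` coordinates, `0` otherwise. -/
noncomputable def hammingAD (D r : ℕ) : Matrix (Fin D → Fin r) (Fin D → Fin r) ℂ :=
  Matrix.of fun u v => if ∀ k, u k ≠ v k then 1 else 0

/-- The Hamming weight of a vertex of `H(D,r)`: the number of nonzero coordinates. -/
def hammingWt {D r : ℕ} [NeZero r] (y : Fin D → Fin r) : ℕ :=
  (Finset.univ.filter fun k => y k ≠ 0).card

/-- The `D`-th dual distance matrix `𝔸_D*` of `H(D,r)` with respect to the base vertex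
`(0,…,0)`: the diagonal matrix with `(y,y)`-entry `(−1)^{w(y)} (r−1)^{D−w(y)}`. -/
noncomputable def hammingADstar (D r : ℕ) [NeZero r] :
    Matrix (Fin D → Fin r) (Fin D → Fin r) ℂ :=
  Matrix.diagonal fun y => (-1) ^ hammingWt y * ((r : ℂ) - 1) ^ (D - hammingWt y)

/-- The group commutator `C = 𝔸_D⁻¹ 𝔸_D*⁻¹ 𝔸_D 𝔸_D*`. -/
noncomputable def hammingC (D r : ℕ) [NeZero r] :
    Matrix (Fin D → Fin r) (Fin D → Fin r) ℂ :=
  (hammingAD D r)⁻¹ * (hammingADstar D r)⁻¹ * hammingAD D r * hammingADstar D r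

/-!
`𝔸_D` and `𝔸_D*` are the `D`-th Kronecker powers of the corresponding matrices `𝔸₁ = J - I`
and `𝔸₁* = diag(r - 1, -1, …, -1)` of the complete graph `K_r = H(1,r)`, so `C` is the Kronecker
power of the commutator `C₁ = 𝔸₁⁻¹ 𝔸₁*⁻¹ 𝔸₁ 𝔸₁*`. A rank-one computation shows that `C₁` is
diagonalized by the basis `1, e₀, e₁ - eⱼ (j ≥ 2)`, with eigenvalues `(1 - r)⁻¹, 1 - r, 1`.
Hence `C` is diagonalized by the Kronecker power of that basis, with eigenvalues `(1 - r)^s`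
where `s` is a sum of `D` exponents in `{-1, 0, 1}`. The polynomial identity and the eigenvalue
description follow from the diagonalization, and the scalars `(1 - r)^s` are distinct because
`|1 - r| > 1`.
-/

open Matrix

namespace Matrix

variable {m n R : Type*}

def kroneckerPow (ι : Type*) [Fintype ι] [CommSemiring R] (g : Matrix m m R) :
    Matrix (ι → m) (ι → m) R :=
  of fun u v => ∏ k, g (u k) (v k)

variable {ι : Type*}

section KroneckerPow

variable [Fintype ι]

section CommSemiring

variable [CommSemiring R]

theorem kroneckerPow_mul [DecidableEq ι] [Fintype m] (g h : Matrix m m R) :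
    kroneckerPow ι g * kroneckerPow ι h = kroneckerPow ι (g * h) := by
  ext u v
  simp only [kroneckerPow, mul_apply, of_apply]
  rw [Fintype.prod_sum fun k x => g (u k) x * h x (v k)]
  exact Finset.sum_congr rfl fun w _ => Finset.prod_mul_distrib.symm

variable [DecidableEq m]

theorem kroneckerPow_one : kroneckerPow ι (1 : Matrix m m R) = 1 := by
  ext u v
  simp [kroneckerPow, one_apply, Finset.prod_boole, funext_iff]

theorem kroneckerPow_diagonal (f : m → R) :
    kroneckerPow ι (diagonal f) = diagonal fun y => ∏ k, f (y k) := by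
  ext u v
  rcases eq_or_ne u v with rfl | huv
  · simp [kroneckerPow]
  · obtain ⟨k, hk⟩ := Function.ne_iff.mp huv
    rw [kroneckerPow, of_apply, diagonal_apply_ne _ huv,
      Finset.prod_eq_zero (Finset.mem_univ k) (diagonal_apply_ne f hk)]

end CommSemiring

variable [CommRing R] [DecidableEq ι] [Fintype m] [DecidableEq m] {g : Matrix m m R}

theorem kroneckerPow_mul_kroneckerPow_inv (hg : IsUnit g) :
    kroneckerPow ι g * kroneckerPow ι g⁻¹ = 1 := by
  rw [kroneckerPow_mul, mul_nonsing_inv _ ((isUnit_iff_isUnit_det g).mp hg), kroneckerPow_one]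

theorem kroneckerPow_inv (hg : IsUnit g) : kroneckerPow ι g⁻¹ = (kroneckerPow ι g)⁻¹ :=
  (inv_eq_right_inv (kroneckerPow_mul_kroneckerPow_inv hg)).symm

theorem isUnit_kroneckerPow (hg : IsUnit g) : IsUnit (kroneckerPow ι g) :=
  .of_mul_eq_one _ (kroneckerPow_mul_kroneckerPow_inv hg)

end KroneckerPow

variable [Fintype n] [DecidableEq n]

theorem isUnit_of_mul_eq_smul_one [Field R] {M N : Matrix n n R} {c : R} (hc : c ≠ 0)
    (h : M * N = c • 1) : IsUnit M :=
  .of_mul_eq_one (c⁻¹ • N) (by rw [Matrix.mul_smul, h, smul_smul, inv_mul_cancel₀ hc, one_smul])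

section Diagonalization

variable [CommRing R] {M P : Matrix n n R} {d : n → R}

theorem eq_mul_diagonal_mul_inv_of_mul_eq (hP : IsUnit P) (h : M * P = P * diagonal d) :
    M = P * diagonal d * P⁻¹ := by
  rw [← h, mul_nonsing_inv_cancel_right _ _ ((isUnit_iff_isUnit_det P).mp hP)]

theorem list_prod_sub_smul_one_mul_of_mul_eq (h : M * P = P * diagonal d) (l : List ι)
    (a : ι → R) :
    (l.map fun s => M - a s • 1).prod * P =
      P * diagonal fun y => (l.map fun s => d y - a s).prod := by
  induction l with
  | nil => simp
  | cons s l ih =>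
    have hs : (M - a s • 1) * P = P * diagonal fun y => d y - a s := by
      have hdiag : diagonal (fun y => d y - a s) = diagonal d - a s • 1 := by
        rw [smul_one_eq_diagonal, diagonal_sub]
      rw [sub_mul, h, hdiag, mul_sub, Matrix.smul_mul, Matrix.mul_smul, Matrix.one_mul,
        Matrix.mul_one]
    simp only [List.map_cons, List.prod_cons]
    rw [Matrix.mul_assoc, ih, ← Matrix.mul_assoc, hs, Matrix.mul_assoc, diagonal_mul_diagonal]

theorem list_prod_sub_smul_one_eq_zero (hP : IsUnit P) (h : M * P = P * diagonal d)
    {l : List ι} {a : ι → R} (hl : ∀ y, ∃ s ∈ l, d y = a s) :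
    (l.map fun s => M - a s • 1).prod = 0 := by
  have hzero : (fun y => (l.map fun s => d y - a s).prod) = fun _ => 0 := funext fun y => by
    obtain ⟨s, hs, hds⟩ := hl y
    exact List.prod_eq_zero (List.mem_map.mpr ⟨s, hs, sub_eq_zero.mpr hds⟩)
  rw [← hP.mul_left_eq_zero, list_prod_sub_smul_one_mul_of_mul_eq h, hzero, diagonal_zero,
    Matrix.mul_zero]

theorem exists_eq_of_mulVec_eq_smul [IsDomain R] (hP : IsUnit P) (h : M * P = P * diagonal d)
    {v : n → R} {μ : R} (hv : v ≠ 0) (hMv : M *ᵥ v = μ • v) : ∃ y, μ = d y := by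
  have hdet := (isUnit_iff_isUnit_det P).mp hP
  have hw : P⁻¹ *ᵥ v ≠ 0 := fun hw => hv <| by
    rw [← one_mulVec v, ← mul_nonsing_inv P hdet, ← mulVec_mulVec, hw, mulVec_zero]
  have hPinv : P⁻¹ * M = diagonal d * P⁻¹ := by
    rw [eq_mul_diagonal_mul_inv_of_mul_eq hP h, Matrix.mul_assoc,
      nonsing_inv_mul_cancel_left _ _ hdet]
  have hdw : diagonal d *ᵥ (P⁻¹ *ᵥ v) = μ • (P⁻¹ *ᵥ v) := by
    rw [mulVec_mulVec, ← hPinv, ← mulVec_mulVec, hMv, mulVec_smul]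
  obtain ⟨y, hy⟩ := Function.ne_iff.mp hw
  have hdy := congr_fun hdw y
  rw [mulVec_diagonal, Pi.smul_apply, smul_eq_mul] at hdy
  exact ⟨y, (mul_right_cancel₀ hy hdy).symm⟩

end Diagonalization

end Matrix

theorem zpow_right_injective_of_one_lt_norm {𝕜 : Type*} [NormedDivisionRing 𝕜] {a : 𝕜}
    (ha : 1 < ‖a‖) : Function.Injective (a ^ · : ℤ → 𝕜) := fun m n hmn =>
  zpow_right_injective₀ (zero_lt_one.trans ha) ha.ne' <| by
    simpa only [norm_zpow] using congrArg norm hmn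

theorem Finset.prod_zpow_eq_zpow_sum {ι G₀ : Type*} [CommGroupWithZero G₀] {a : G₀} (ha : a ≠ 0)
    (s : Finset ι) (f : ι → ℤ) : ∏ i ∈ s, a ^ f i = a ^ ∑ i ∈ s, f i := by
  induction s using Finset.cons_induction with
  | empty => simp
  | cons i s hi ih => rw [Finset.prod_cons, Finset.sum_cons, ih, zpow_add₀ ha]

theorem Fin.zero_ne_one_of_one_lt {r : ℕ} [NeZero r] (hr : 1 < r) : (0 : Fin r) ≠ 1 := by
  simp [Fin.ext_iff, Nat.mod_eq_of_lt hr]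

section Hamming

variable (r : ℕ) [NeZero r]

local notation "e" i => (Pi.single i 1 : Fin r → ℂ)
local notation "J" => (vecMulVec 1 1 : Matrix (Fin r) (Fin r) ℂ)
local notation "𝔸₁" => SimpleGraph.adjMatrix ℂ (SimpleGraph.completeGraph (Fin r))

/-- `𝔸₁*` for `K_r = H(1,r)` and the base vertex `0`. -/
def completeDualAdj : Matrix (Fin r) (Fin r) ℂ :=
  diagonal fun i => if i = 0 then (r : ℂ) - 1 else -1

noncomputable def completeCommutator : Matrix (Fin r) (Fin r) ℂ :=
  𝔸₁⁻¹ * (completeDualAdj r)⁻¹ * 𝔸₁ * completeDualAdj r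

/-- The columns are `1`, `e₀` and `e₁ - eⱼ` (`j ≥ 2`). -/
def completeEigenbasis : Matrix (Fin r) (Fin r) ℂ :=
  vecMulVec 1 (e 0) + vecMulVec (e 0) (e 0) + vecMulVec (e 0) (e 1) + vecMulVec (e 1) 1
    - vecMulVec (e 1) (e 0) - 1

def completeEigenexp (j : Fin r) : ℤ :=
  if j = 0 then -1 else if j = 1 then 1 else 0

variable {r}

omit [NeZero r] in
theorem adjMatrix_completeGraph_eq : 𝔸₁ = J - 1 := by
  rw [SimpleGraph.adjMatrix_completeGraph_eq_of_one_sub_one]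
  congr 1
  ext
  simp [vecMulVec_apply]

theorem completeDualAdj_eq : completeDualAdj r = (r : ℂ) • vecMulVec (e 0) (e 0) - 1 := by
  ext i j
  rcases eq_or_ne i j with rfl | hij
  · by_cases h0 : i = 0 <;> simp [completeDualAdj, vecMulVec_apply, h0]
  · simp [completeDualAdj, vecMulVec_apply, hij, Pi.single_apply]
    rintro rfl rfl
    exact absurd rfl hij

omit [NeZero r] in
theorem isUnit_adjMatrix_completeGraph (hr : 1 < r) : IsUnit 𝔸₁ := by
  refine isUnit_of_mul_eq_smul_one (N := J - ((r : ℂ) - 1) • 1)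
    (sub_ne_zero.mpr (Nat.cast_ne_one.mpr hr.ne')) ?_
  rw [adjMatrix_completeGraph_eq]
  simp only [sub_mul, mul_sub, mul_smul_comm, one_mul, mul_one,
    vecMulVec_mul_vecMulVec, vecMulVec_smul, one_dotProduct_one, Fintype.card_fin]
  module

theorem isUnit_completeDualAdj (hr : 1 < r) : IsUnit (completeDualAdj r) := by
  refine isUnit_diagonal.mpr (Pi.isUnit_iff.mpr fun i => ?_)
  split_ifs
  · exact (sub_ne_zero.mpr (Nat.cast_ne_one.mpr hr.ne')).isUnit
  · exact isUnit_one.neg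

theorem isUnit_completeEigenbasis (hr : 1 < r) : IsUnit (completeEigenbasis r) := by
  have h01 := Fin.zero_ne_one_of_one_lt hr
  refine isUnit_of_mul_eq_smul_one
    (N := J - vecMulVec 1 (e 0) + ((r : ℂ) - 1) • vecMulVec (e 0) (e 0)
      + ((r : ℂ) + 1) • vecMulVec (e 1) (e 0) + ((r : ℂ) - 1) • vecMulVec (e 1) (e 1)
      - (2 : ℂ) • vecMulVec (e 1) 1 - ((r : ℂ) - 1) • 1)
    (sub_ne_zero.mpr (Nat.cast_ne_one.mpr hr.ne')) ?_
  rw [completeEigenbasis]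
  simp only [sub_mul, mul_sub, add_mul, mul_add, mul_smul_comm, one_mul, mul_one,
    vecMulVec_mul_vecMulVec, vecMulVec_smul, one_dotProduct_one, single_dotProduct,
    dotProduct_single, Pi.single_eq_same, Pi.single_eq_of_ne h01, Pi.single_eq_of_ne h01.symm,
    Pi.one_apply, smul_smul, smul_sub, smul_add, Fintype.card_fin]
  module

/-- Scaling by `r - 1` clears the eigenvalue `(1 - r)⁻¹`, so that the eigenvalue equation below
becomes an identity between rank-one combinations with polynomial coefficients. -/
theorem smul_diagonal_completeEigenvalues (hr : 1 < r) :
    ((r : ℂ) - 1) • diagonal (fun j => (1 - r : ℂ) ^ completeEigenexp r j) =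
      ((r : ℂ) - 1) • 1 - (r : ℂ) • vecMulVec (e 0) (e 0)
        - ((r : ℂ) * (r - 1)) • vecMulVec (e 1) (e 1) := by
  have h01 := Fin.zero_ne_one_of_one_lt hr
  have hr' : (1 : ℂ) - r ≠ 0 := sub_ne_zero.mpr (Nat.cast_ne_one.mpr hr.ne').symm
  ext i j
  rcases eq_or_ne i j with rfl | hij
  · by_cases h0 : i = 0
    · subst h0
      simp [completeEigenexp, vecMulVec_apply, h01]
      field_simp
      ring
    by_cases h1 : i = 1
    · subst h1
      simp [completeEigenexp, vecMulVec_apply, h01.symm]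
      ring
    · simp [completeEigenexp, vecMulVec_apply, h0, h1]
  · simp [hij, vecMulVec_apply, Pi.single_apply]
    split_ifs <;> simp_all

theorem adjMatrix_mul_completeDualAdj_mul_completeEigenbasis (hr : 1 < r) :
    𝔸₁ * completeDualAdj r * completeEigenbasis r =
      completeDualAdj r * 𝔸₁ * completeEigenbasis r *
        diagonal (fun j => (1 - r : ℂ) ^ completeEigenexp r j) := by
  have h01 := Fin.zero_ne_one_of_one_lt hr
  apply smul_right_injective _ (sub_ne_zero.mpr (Nat.cast_ne_one.mpr hr.ne') : (r : ℂ) - 1 ≠ 0)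
  dsimp only
  rw [← Matrix.mul_smul (completeDualAdj r * 𝔸₁ * completeEigenbasis r),
    smul_diagonal_completeEigenvalues hr, adjMatrix_completeGraph_eq, completeDualAdj_eq,
    completeEigenbasis]
  simp only [sub_mul, mul_sub, add_mul, mul_add, smul_mul_assoc, mul_smul_comm, one_mul, mul_one,
    vecMulVec_mul_vecMulVec, vecMulVec_smul, one_dotProduct_one, single_dotProduct,
    dotProduct_single, Pi.single_eq_same, Pi.single_eq_of_ne h01, Pi.single_eq_of_ne h01.symm,
    Pi.one_apply, smul_smul, smul_sub, smul_add, Fintype.card_fin]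
  module

theorem completeCommutator_mul_completeEigenbasis (hr : 1 < r) :
    completeCommutator r * completeEigenbasis r =
      completeEigenbasis r * diagonal fun j => (1 - r : ℂ) ^ completeEigenexp r j := by
  have hA := (isUnit_iff_isUnit_det _).mp (isUnit_adjMatrix_completeGraph hr)
  have hB := (isUnit_iff_isUnit_det _).mp (isUnit_completeDualAdj hr)
  have key := adjMatrix_mul_completeDualAdj_mul_completeEigenbasis hr
  simp only [completeCommutator, Matrix.mul_assoc] at key ⊢
  rw [key, nonsing_inv_mul_cancel_left _ _ hB, nonsing_inv_mul_cancel_left _ _ hA]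

variable (D : ℕ)

omit [NeZero r] in
theorem hammingAD_eq_kroneckerPow : hammingAD D r = kroneckerPow (Fin D) 𝔸₁ := by
  ext u v
  simp only [hammingAD, kroneckerPow, of_apply, SimpleGraph.adjMatrix_apply,
    SimpleGraph.top_adj, Finset.prod_boole, Finset.mem_univ, true_implies]

theorem hammingADstar_eq_kroneckerPow :
    hammingADstar D r = kroneckerPow (Fin D) (completeDualAdj r) := by
  rw [completeDualAdj, kroneckerPow_diagonal, hammingADstar]
  congr 1
  funext y
  have hcard : (Finset.univ.filter fun k => y k = 0).card = D - hammingWt y := by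
    have := Finset.card_filter_add_card_filter_not (s := Finset.univ) (fun k => y k = 0)
    simp only [Finset.card_univ, Fintype.card_fin] at this
    have hwt : hammingWt y = (Finset.univ.filter fun k => ¬y k = 0).card := rfl
    omega
  rw [Finset.prod_ite, Finset.prod_const, Finset.prod_const, hcard, mul_comm]
  rfl

theorem hammingC_eq_kroneckerPow (hr : 1 < r) :
    hammingC D r = kroneckerPow (Fin D) (completeCommutator r) := by
  rw [hammingC, hammingAD_eq_kroneckerPow, hammingADstar_eq_kroneckerPow,
    ← kroneckerPow_inv (isUnit_adjMatrix_completeGraph hr),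
    ← kroneckerPow_inv (isUnit_completeDualAdj hr), kroneckerPow_mul, kroneckerPow_mul,
    kroneckerPow_mul, completeCommutator]

theorem hammingC_mul_kroneckerPow_completeEigenbasis (hr : 1 < r) :
    hammingC D r * kroneckerPow (Fin D) (completeEigenbasis r) =
      kroneckerPow (Fin D) (completeEigenbasis r) *
        diagonal fun y => (1 - r : ℂ) ^ ∑ k, completeEigenexp r (y k) := by
  have hsum (y : Fin D → Fin r) : (1 - r : ℂ) ^ ∑ k, completeEigenexp r (y k) =
      ∏ k, (1 - r : ℂ) ^ completeEigenexp r (y k) :=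
    (Finset.prod_zpow_eq_zpow_sum (sub_ne_zero.mpr (Nat.cast_ne_one.mpr hr.ne').symm) _ _).symm
  simp_rw [hsum]
  rw [hammingC_eq_kroneckerPow D hr, kroneckerPow_mul, completeCommutator_mul_completeEigenbasis hr,
    ← kroneckerPow_mul, kroneckerPow_diagonal]

variable {D}

theorem sum_completeEigenexp_mem_Icc (y : Fin D → Fin r) :
    ∑ k, completeEigenexp r (y k) ∈ Finset.Icc (-(D : ℤ)) D := by
  have hbound (j : Fin r) : -1 ≤ completeEigenexp r j ∧ completeEigenexp r j ≤ 1 := by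
    unfold completeEigenexp
    split_ifs <;> omega
  rw [Finset.mem_Icc]
  constructor
  · simpa using Finset.sum_le_sum (s := Finset.univ) fun k _ => (hbound (y k)).1
  · simpa using Finset.sum_le_sum (s := Finset.univ) fun k _ => (hbound (y k)).2

end Hamming

theorem stmt15 (D r : ℕ) (hr : 3 ≤ r) :
    ((((Finset.Icc (-(D : ℤ)) (D : ℤ)).sort (· ≤ ·)).map
        (fun s => @hammingC D r ⟨by omega⟩
          - ((1 - (r : ℂ)) ^ s) • (1 : Matrix (Fin D → Fin r) (Fin D → Fin r) ℂ))).prod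
      = 0) ∧
    -- the `2D+1` scalars `(1−r)^s` (`−D ≤ s ≤ D`) are pairwise distinct:
    Set.InjOn (fun s : ℤ => (1 - (r : ℂ)) ^ s) (Set.Icc (-(D : ℤ)) (D : ℤ)) ∧
    -- `C` is diagonalizable:
    (∃ (P : Matrix (Fin D → Fin r) (Fin D → Fin r) ℂ) (d : (Fin D → Fin r) → ℂ),
      IsUnit P ∧ @hammingC D r ⟨by omega⟩ = P * Matrix.diagonal d * P⁻¹) ∧
    -- every eigenvalue of `C` is of the form `(1−r)^s` with `−D ≤ s ≤ D`:
    (∀ μ : ℂ, (∃ v : (Fin D → Fin r) → ℂ, v ≠ 0 ∧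
        (@hammingC D r ⟨by omega⟩).mulVec v = μ • v) →
      ∃ s : ℤ, -(D : ℤ) ≤ s ∧ s ≤ (D : ℤ) ∧ μ = (1 - (r : ℂ)) ^ s) := by
  have : NeZero r := ⟨by omega⟩
  have hP := isUnit_kroneckerPow (ι := Fin D) (isUnit_completeEigenbasis (r := r) (by omega))
  have hCP := hammingC_mul_kroneckerPow_completeEigenbasis D (r := r) (by omega)
  have hnorm : 1 < ‖(1 : ℂ) - r‖ := by
    rw [norm_sub_rev, ← Nat.cast_pred (by omega), Complex.norm_natCast]
    exact_mod_cast (by omega : 1 < r - 1)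
  refine ⟨list_prod_sub_smul_one_eq_zero hP hCP fun y => ⟨_, ?_, rfl⟩,
    (zpow_right_injective_of_one_lt_norm hnorm).injOn,
    ⟨_, _, hP, eq_mul_diagonal_mul_inv_of_mul_eq hP hCP⟩, ?_⟩
  · exact (Finset.mem_sort _).mpr (sum_completeEigenexp_mem_Icc y)
  · rintro μ ⟨v, hv, hCv⟩
    obtain ⟨y, rfl⟩ := exists_eq_of_mulVec_eq_smul hP hCP hv hCv
    obtain ⟨hlo, hhi⟩ := Finset.mem_Icc.mp (sum_completeEigenexp_mem_Icc y)
    exact ⟨_, hlo, hhi, rfl⟩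
end

section
/- Fix integers D ≥ 1 and r ≥ 3, and let C = 𝔸_D⁻¹𝔸_D*⁻¹𝔸_D𝔸_D*. Then for every integer s with −D ≤ s ≤ D, the eigenspace {v ∈ ℂ^𝕏 : C v = (1−r)^s·v} of C for the eigenvalue (1−r)^s has dimension Σ binom(D,i)·binom(i,D−j)·(r−2)^{i+j−D}, where the sum is over all pairs of integers (i,j) with 0 ≤ i, j ≤ D, i + j ≥ D, and j − i = s. -/
/-- The eigenspace `{v : C v = μ v}` of a matrix `C` for the scalar `μ`. -/
noncomputable def matEigenspace {n : Type*} [Fintype n] [DecidableEq n]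
    (C : Matrix n n ℂ) (μ : ℂ) : Submodule ℂ (n → ℂ) :=
  LinearMap.ker (Matrix.mulVecLin C - μ • LinearMap.id)

section TENS
open Matrix Finset
variable {D r : ℕ}




/-- Tensor power matrix over coordinates. -/
noncomputable def tens (D r : ℕ) (M : Matrix (Fin r) (Fin r) ℂ) :
    Matrix (Fin D → Fin r) (Fin D → Fin r) ℂ :=
  Matrix.of fun u v => ∏ k, M (u k) (v k)

lemma tens_mul (M N : Matrix (Fin r) (Fin r) ℂ) :
    tens D r M * tens D r N = tens D r (M * N) := by
  ext u v
  simp only [tens, Matrix.mul_apply, Matrix.of_apply]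
  rw [show (∏ k, ∑ t, M (u k) t * N t (v k)) = _ from
    Finset.prod_univ_sum (fun _ => Finset.univ) (fun k t => M (u k) t * N t (v k))]
  simp [Finset.prod_mul_distrib]

lemma tens_one : tens D r 1 = 1 := by
  ext u v
  simp only [tens, Matrix.of_apply, Matrix.one_apply]
  by_cases h : u = v
  · subst h; simp
  · rw [if_neg h]
    obtain ⟨k, hk⟩ : ∃ k, u k ≠ v k := by
      by_contra hc; push_neg at hc; exact h (funext hc)
    exact Finset.prod_eq_zero (Finset.mem_univ k) (by simp [hk])

lemma tens_diagonal (d : Fin r → ℂ) :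
    tens D r (Matrix.diagonal d) = Matrix.diagonal (fun y => ∏ k, d (y k)) := by
  ext u v
  simp only [tens, Matrix.of_apply, Matrix.diagonal_apply]
  by_cases h : u = v
  · subst h; simp
  · rw [if_neg h]
    obtain ⟨k, hk⟩ : ∃ k, u k ≠ v k := by
      by_contra hc; push_neg at hc; exact h (funext hc)
    exact Finset.prod_eq_zero (Finset.mem_univ k) (by simp [hk])

noncomputable def invertibleTens (M N : Matrix (Fin r) (Fin r) ℂ) (h : M * N = 1) :
    Invertible (tens D r M) :=
  invertibleOfRightInverse _ _ (by rw [tens_mul, h, tens_one])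

end TENS
section KLEVEL
open Matrix Finset
variable {r : ℕ}


/-- adjacency matrix of the complete graph `K_r` (as `J - I`). -/
noncomputable def adjK (r : ℕ) : Matrix (Fin r) (Fin r) ℂ :=
  Matrix.of fun x y => if x ≠ y then 1 else 0

/-- dual diagonal entries for `K_r`. -/
noncomputable def dK (r : ℕ) [NeZero r] : Fin r → ℂ :=
  fun x => if x = 0 then (r : ℂ) - 1 else -1

/-- eigenvector matrix: columns `e₀`, `𝟙`, `e₁ - e_j`. -/
noncomputable def pK (r : ℕ) [NeZero r] : Matrix (Fin r) (Fin r) ℂ :=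
  Matrix.of fun x j =>
    if j = 0 then (if x = 0 then 1 else 0)
    else if j = 1 then 1
    else (if x = 1 then 1 else 0) - (if x = j then 1 else 0)

/-- inverse of `pK`. -/
noncomputable def qK (r : ℕ) [NeZero r] : Matrix (Fin r) (Fin r) ℂ :=
  Matrix.of fun i y =>
    if y = 0 then (if i = 0 then 1 else 0)
    else (if i = 0 then -((r:ℂ)-1)⁻¹ else ((r:ℂ)-1)⁻¹) - (if i = y ∧ y ≠ 1 then 1 else 0)

/-- eigenvalues of the commutator for `K_r`. -/
noncomputable def lamK (r : ℕ) [NeZero r] : Fin r → ℂ :=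
  fun j => if j = 0 then 1 - (r : ℂ) else if j = 1 then (1 - (r : ℂ))⁻¹ else 1

variable [NeZero r]

lemma f01 (hr : 3 ≤ r) : (0 : Fin r) ≠ 1 := by
  obtain ⟨m, rfl⟩ : ∃ m, r = m + 1 := ⟨r - 1, by omega⟩
  have : NeZero m := ⟨by omega⟩
  exact Fin.zero_ne_one'

lemma hrC (hr : 3 ≤ r) : (r : ℂ) - 1 ≠ 0 := by
  rw [sub_ne_zero]
  exact_mod_cast (by omega : r ≠ 1)

lemma hrC' (hr : 3 ≤ r) : 1 - (r : ℂ) ≠ 0 := by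
  rw [sub_ne_zero]
  exact fun h => hrC hr (by rw [← h]; ring)

lemma adj_mul_apply (M : Matrix (Fin r) (Fin r) ℂ) (x j : Fin r) :
    (adjK r * M) x j = (∑ y, M y j) - M x j := by
  rw [Matrix.mul_apply]
  rw [Finset.sum_congr rfl (fun y _ => show adjK r x y * M y j
      = M y j - (if y = x then M y j else 0) by
    by_cases h : y = x
    · subst h; simp [adjK]
    · simp [adjK, Ne.symm h, h])]
  rw [Finset.sum_sub_distrib, Finset.sum_ite_eq']
  simp

lemma sum_dK (hr : 3 ≤ r) : ∑ y, dK r y = 0 := by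
  rw [Finset.sum_congr rfl (fun y _ => show dK r y = -1 + (if y = 0 then (r:ℂ) else 0) by
    by_cases h : y = 0 <;> simp [dK, h] <;> ring)]
  rw [Finset.sum_add_distrib, Finset.sum_const, Finset.sum_ite_eq']
  simp [nsmul_eq_mul]

lemma hS (hr : 3 ≤ r) (j : Fin r) :
    ∑ y, dK r y * pK r y j = if j = 0 then (r:ℂ) - 1 else 0 := by
  by_cases hj0 : j = 0
  · subst hj0
    simp [pK, dK, mul_ite, Finset.sum_ite_eq']
  · rw [if_neg hj0]
    by_cases hj1 : j = 1
    · subst hj1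
      have : ∀ y : Fin r, dK r y * pK r y 1 = dK r y := by
        intro y; simp [pK, Ne.symm (f01 hr)]
      rw [Finset.sum_congr rfl (fun y _ => this y), sum_dK hr]
    · rw [Finset.sum_congr rfl (fun y _ => show dK r y * pK r y j
          = (if y = 1 then dK r y else 0) - (if y = j then dK r y else 0) by
        simp [pK, hj0, hj1, mul_sub, mul_ite])]
      rw [Finset.sum_sub_distrib, Finset.sum_ite_eq', Finset.sum_ite_eq']
      simp [dK, Ne.symm (f01 hr), hj0]

lemma hT (hr : 3 ≤ r) (j : Fin r) :
    ∑ y, pK r y j = if j = 0 then 1 else if j = 1 then (r:ℂ) else 0 := by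
  by_cases hj0 : j = 0
  · subst hj0; simp [pK, Finset.sum_ite_eq']
  · rw [if_neg hj0]
    by_cases hj1 : j = 1
    · subst hj1; simp [pK, Ne.symm (f01 hr)]
    · rw [if_neg hj1]
      rw [Finset.sum_congr rfl (fun y _ => show pK r y j
          = (if y = 1 then (1:ℂ) else 0) - (if y = j then 1 else 0) by
        simp [pK, hj0, hj1])]
      rw [Finset.sum_sub_distrib, Finset.sum_ite_eq', Finset.sum_ite_eq']
      simp

lemma keyK (hr : 3 ≤ r) :
    adjK r * Matrix.diagonal (dK r) * pK r
      = Matrix.diagonal (dK r) * adjK r * (pK r * Matrix.diagonal (lamK r)) := by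
  have h01 := f01 hr
  have h10 : (1 : Fin r) ≠ 0 := Ne.symm (f01 hr)
  have hne := hrC' hr
  ext x j
  rw [Matrix.mul_assoc (adjK r), Matrix.mul_assoc (Matrix.diagonal (dK r))]
  simp only [Matrix.diagonal_mul, adj_mul_apply, Matrix.mul_diagonal]
  rw [← Finset.sum_mul, hS hr, hT hr]
  by_cases hj0 : j = 0
  · subst hj0
    by_cases hx : x = 0
    · subst hx
      simp [pK, lamK, dK, h01]
    · simp [pK, lamK, dK, h01, hx]
  · rw [if_neg hj0, if_neg hj0]
    by_cases hj1 : j = 1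
    · subst hj1
      simp only [pK, lamK, Matrix.of_apply, if_neg h10, if_pos rfl, if_true, mul_one]
      have hkey : (r:ℂ) * (1 - (r:ℂ))⁻¹ - (1:ℂ) * (1 - (r:ℂ))⁻¹ = -1 := by
        field_simp
        ring
      rw [hkey]
      ring
    · rw [if_neg hj1]
      simp only [pK, lamK, Matrix.of_apply, if_neg hj0, if_neg hj1]
      ring

lemma hQrow (hr : 3 ≤ r) (a : Fin r) :
    ∑ y, qK r a y = if a = 1 then 1 else 0 := by
  have h01 := f01 hr
  have hne := hrC hr
  by_cases ha0 : a = 0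
  · subst ha0
    rw [Finset.sum_congr rfl (fun y _ => show qK r 0 y
        = -((r:ℂ)-1)⁻¹ + (if y = 0 then 1 + ((r:ℂ)-1)⁻¹ else 0) by
      by_cases hy : y = 0
      · subst hy
        rw [show qK r 0 0 = 1 by simp [qK], if_pos rfl]
        ring
      · have h1 : ¬((0:Fin r) = y ∧ y ≠ 1) := fun h => hy h.1.symm
        simp [qK, hy, h1])]
    rw [Finset.sum_add_distrib, Finset.sum_const, Finset.sum_ite_eq']
    simp only [Finset.mem_univ, if_pos, Finset.card_univ, Fintype.card_fin, nsmul_eq_mul,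
      if_neg h01]
    field_simp
    ring
  · by_cases ha1 : a = 1
    · subst ha1
      rw [Finset.sum_congr rfl (fun y _ => show qK r 1 y
          = ((r:ℂ)-1)⁻¹ - (if y = 0 then ((r:ℂ)-1)⁻¹ else 0) by
        by_cases hy : y = 0
        · subst hy; simp [qK, Ne.symm h01]
        · have h1 : ¬((1:Fin r) = y ∧ y ≠ 1) := fun h => h.2 h.1.symm
          have h2 : ¬((1:Fin r) = 0) := Ne.symm h01
          simp [qK, hy, h1, h2])]
      rw [Finset.sum_sub_distrib, Finset.sum_const, Finset.sum_ite_eq']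
      simp only [Finset.mem_univ, if_pos, Finset.card_univ, Fintype.card_fin, nsmul_eq_mul,
        if_pos rfl]
      field_simp
    · rw [if_neg ha1]
      rw [Finset.sum_congr rfl (fun y _ => show qK r a y
          = ((r:ℂ)-1)⁻¹ - (if y = 0 then ((r:ℂ)-1)⁻¹ else 0) - (if y = a then 1 else 0) by
        by_cases hy0 : y = 0
        · subst hy0
          have h1 : ¬((0:Fin r) = a) := fun h => ha0 h.symm
          simp [qK, ha0, h1]
        · by_cases hya : y = a
          · subst hya; simp [qK, hy0, ha0, ha1]
          · have h1 : ¬(a = y ∧ y ≠ 1) := fun h => hya h.1.symm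
            simp [qK, hy0, h1, ha0, hya])]
      rw [Finset.sum_sub_distrib, Finset.sum_sub_distrib, Finset.sum_const,
        Finset.sum_ite_eq', Finset.sum_ite_eq']
      simp only [Finset.mem_univ, if_pos, Finset.card_univ, Fintype.card_fin, nsmul_eq_mul]
      field_simp
      ring

lemma qpK (hr : 3 ≤ r) : qK r * pK r = 1 := by
  have h01 := f01 hr
  ext a b
  rw [Matrix.mul_apply]
  by_cases hb0 : b = 0
  · subst hb0
    rw [Finset.sum_congr rfl (fun x _ => show qK r a x * pK r x 0
        = if x = 0 then qK r a x else 0 by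
      by_cases hx : x = 0 <;> simp [pK, hx])]
    rw [Finset.sum_ite_eq']
    simp [qK, Matrix.one_apply]
  · by_cases hb1 : b = 1
    · subst hb1
      rw [Finset.sum_congr rfl (fun x _ => show qK r a x * pK r x 1 = qK r a x by
        simp [pK, Ne.symm h01])]
      rw [hQrow hr]
      simp [Matrix.one_apply]
    · rw [Finset.sum_congr rfl (fun x _ => show qK r a x * pK r x b
          = (if x = 1 then qK r a x else 0) - (if x = b then qK r a x else 0) by
        simp [pK, hb0, hb1, mul_sub, mul_ite])]
      rw [Finset.sum_sub_distrib, Finset.sum_ite_eq', Finset.sum_ite_eq']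
      simp only [Finset.mem_univ, if_pos]
      rw [show qK r a 1 = (if a = 0 then -((r:ℂ)-1)⁻¹ else ((r:ℂ)-1)⁻¹) by
        simp [qK, Ne.symm h01]]
      rw [show qK r a b = (if a = 0 then -((r:ℂ)-1)⁻¹ else ((r:ℂ)-1)⁻¹)
          - (if a = b then 1 else 0) by simp [qK, hb0, hb1]]
      rw [Matrix.one_apply]
      ring_nf

noncomputable def invertiblePK (hr : 3 ≤ r) : Invertible (pK r) :=
  invertibleOfLeftInverse _ (qK r) (qpK hr)

/-- explicit inverse of `adjK`. -/
noncomputable def bK (r : ℕ) : Matrix (Fin r) (Fin r) ℂ :=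
  Matrix.of fun x y => ((r:ℂ)-1)⁻¹ * (if x = y then 2 - (r:ℂ) else 1)

lemma adjK_mul_bK (hr : 3 ≤ r) : adjK r * bK r = 1 := by
  have hne := hrC hr
  ext x z
  rw [adj_mul_apply]
  rw [Finset.sum_congr rfl (fun y _ => show bK r y z
      = ((r:ℂ)-1)⁻¹ + (if y = z then ((r:ℂ)-1)⁻¹ * (1 - (r:ℂ)) else 0) by
    by_cases h : y = z
    · subst h; simp [bK]; ring
    · simp [bK, h])]
  rw [Finset.sum_add_distrib, Finset.sum_const, Finset.sum_ite_eq']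
  simp only [Finset.mem_univ, if_pos, Finset.card_univ, Fintype.card_fin, nsmul_eq_mul]
  rw [Matrix.one_apply]
  by_cases h : x = z
  · subst h; simp [bK]; field_simp; try ring
  · simp [bK, h]; field_simp; try ring

lemma dK_ne_zero (hr : 3 ≤ r) (x : Fin r) : dK r x ≠ 0 := by
  by_cases h : x = 0 <;> simp [dK, h, hrC hr]

lemma diag_dK_mul_inv (hr : 3 ≤ r) :
    Matrix.diagonal (dK r) * Matrix.diagonal (fun x => (dK r x)⁻¹) = 1 := by
  rw [Matrix.diagonal_mul_diagonal]
  rw [show (fun x => dK r x * (dK r x)⁻¹) = fun _ => (1:ℂ) from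
    funext fun x => mul_inv_cancel₀ (dK_ne_zero hr x)]
  exact Matrix.diagonal_one

end KLEVEL

section EIG
open Matrix Finset
variable {n : Type*} [Fintype n] [DecidableEq n]

lemma mem_matEigenspace (C : Matrix n n ℂ) (μ : ℂ) (v : n → ℂ) :
    v ∈ matEigenspace C μ ↔ C *ᵥ v = μ • v := by
  simp [matEigenspace, LinearMap.mem_ker, LinearMap.sub_apply, LinearMap.smul_apply,
    LinearMap.id_apply, Matrix.mulVecLin_apply, sub_eq_zero]

lemma matEigenspace_conj (P C : Matrix n n ℂ) [Invertible P] (μ : ℂ) :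
    matEigenspace (P * C * P⁻¹) μ = Submodule.map (Matrix.mulVecLin P) (matEigenspace C μ) := by
  have hPP : P * P⁻¹ = 1 := Matrix.mul_nonsing_inv _ (Matrix.isUnit_det_of_invertible _)
  have hPP' : P⁻¹ * P = 1 := Matrix.nonsing_inv_mul _ (Matrix.isUnit_det_of_invertible _)
  ext v
  rw [Submodule.mem_map, mem_matEigenspace]
  constructor
  · intro h
    refine ⟨P⁻¹ *ᵥ v, (mem_matEigenspace _ _ _).mpr ?_, ?_⟩
    · have h2 := congrArg (fun w => P⁻¹ *ᵥ w) h
      simp only [Matrix.mulVec_mulVec, Matrix.mulVec_smul] at h2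
      rw [← Matrix.mul_assoc, ← Matrix.mul_assoc, hPP', Matrix.one_mul] at h2
      rw [← Matrix.mulVec_mulVec] at h2
      exact h2
    · rw [Matrix.mulVecLin_apply, Matrix.mulVec_mulVec, hPP, Matrix.one_mulVec]
  · rintro ⟨w, hw, rfl⟩
    rw [mem_matEigenspace] at hw
    rw [Matrix.mulVecLin_apply, Matrix.mulVec_mulVec, Matrix.mul_assoc (P * C) P⁻¹ P,
      hPP', Matrix.mul_one, ← Matrix.mulVec_mulVec, hw, Matrix.mulVec_smul]

lemma finrank_matEigenspace_conj (P C : Matrix n n ℂ) [Invertible P] (μ : ℂ) :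
    Module.finrank ℂ (matEigenspace (P * C * P⁻¹) μ)
      = Module.finrank ℂ (matEigenspace C μ) := by
  have hPP' : P⁻¹ * P = 1 := Matrix.nonsing_inv_mul _ (Matrix.isUnit_det_of_invertible _)
  have hinj : Function.Injective (Matrix.mulVecLin P) := by
    intro a b hab
    have h2 := congrArg (fun w => P⁻¹ *ᵥ w) hab
    simpa [Matrix.mulVecLin_apply, Matrix.mulVec_mulVec, hPP', Matrix.one_mulVec] using h2
  rw [matEigenspace_conj]
  exact (Submodule.equivMapOfInjective _ hinj (matEigenspace C μ)).finrank_eq.symm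

lemma finrank_matEigenspace_diagonal (g : n → ℂ) (μ : ℂ) :
    Module.finrank ℂ (matEigenspace (Matrix.diagonal g) μ)
      = (Finset.univ.filter fun i => g i = μ).card := by
  classical
  have hdiag : matEigenspace (Matrix.diagonal g) μ
      = LinearMap.ker (Matrix.mulVecLin (Matrix.diagonal (fun i => g i - μ))) := by
    ext v
    rw [mem_matEigenspace, LinearMap.mem_ker, Matrix.mulVecLin_apply, funext_iff, funext_iff]
    apply forall_congr'
    intro i
    rw [Matrix.mulVec_diagonal, Matrix.mulVec_diagonal, Pi.smul_apply, Pi.zero_apply,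
      smul_eq_mul, sub_mul, sub_eq_zero]
  rw [hdiag]
  have h1 := LinearMap.finrank_range_add_finrank_ker
    (Matrix.mulVecLin (Matrix.diagonal (fun i => g i - μ)))
  have h2 : Module.finrank ℂ
      (LinearMap.range (Matrix.mulVecLin (Matrix.diagonal (fun i => g i - μ))))
      = Fintype.card {i // g i - μ ≠ 0} := Matrix.rank_diagonal (fun i => g i - μ)
  have h3 : Fintype.card {i // g i - μ ≠ 0} = (Finset.univ.filter fun i => ¬ g i = μ).card := by
    rw [Fintype.card_subtype]
    apply Finset.card_bij (fun a _ => a) <;> simp [sub_ne_zero]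
  have h4 : (Finset.univ.filter fun i => g i = μ).card
      + (Finset.univ.filter fun i => ¬ g i = μ).card = Fintype.card n := by
    rw [Finset.card_filter_add_card_filter_not, Finset.card_univ]
  have h5 : Module.finrank ℂ (n → ℂ) = Fintype.card n :=
    Module.finrank_fintype_fun_eq_card ℂ
  omega

end EIG

section DLEVEL
open Matrix Finset
variable {D r : ℕ} [NeZero r]

lemma AD_eq : hammingAD D r = tens D r (adjK r) := by
  ext u v
  simp only [hammingAD, tens, Matrix.of_apply, adjK]
  by_cases h : ∀ k, u k ≠ v k
  · rw [if_pos h]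
    exact (Finset.prod_eq_one (fun k _ => by simp [h k])).symm
  · rw [if_neg h]
    push_neg at h
    obtain ⟨k, hk⟩ := h
    exact (Finset.prod_eq_zero (Finset.mem_univ k) (by simp [hk])).symm

lemma ADstar_eq : hammingADstar D r = tens D r (Matrix.diagonal (dK r)) := by
  rw [tens_diagonal]
  unfold hammingADstar
  refine congrArg Matrix.diagonal (funext fun y => ?_)
  have hc : (univ.filter fun k => y k = 0).card + (univ.filter fun k => ¬ y k = 0).card = D := by
    rw [Finset.card_filter_add_card_filter_not, Finset.card_univ, Fintype.card_fin]
  have hwt : hammingWt y = (univ.filter fun k => ¬ y k = 0).card := by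
    unfold hammingWt
    simp only [ne_eq]
  have hle : hammingWt y ≤ D := by omega
  have hprod : ∏ k, dK r (y k)
      = ((r:ℂ)-1) ^ (univ.filter fun k => y k = 0).card
        * (-1:ℂ) ^ (univ.filter fun k => ¬ y k = 0).card := by
    unfold dK
    rw [Finset.prod_ite]
    simp
  rw [hprod, ← hwt, show (univ.filter fun k => y k = 0).card = D - hammingWt y by omega,
    mul_comm]

noncomputable def PP (D r : ℕ) [NeZero r] : Matrix (Fin D → Fin r) (Fin D → Fin r) ℂ :=
  tens D r (pK r)

noncomputable def LL (D r : ℕ) [NeZero r] : Matrix (Fin D → Fin r) (Fin D → Fin r) ℂ :=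
  Matrix.diagonal (fun ψ => ∏ k, lamK r (ψ k))

noncomputable def invertiblePP (hr : 3 ≤ r) : Invertible (PP D r) :=
  invertibleTens _ _ (mul_eq_one_comm.mpr (qpK hr))

lemma hC_eq (hr : 3 ≤ r) : hammingC D r = PP D r * LL D r * (PP D r)⁻¹ := by
  haveI iP : Invertible (PP D r) := invertiblePP hr
  haveI iA : Invertible (hammingAD D r) := by
    rw [AD_eq]; exact invertibleTens _ _ (adjK_mul_bK hr)
  haveI iS : Invertible (hammingADstar D r) := by
    rw [ADstar_eq]; exact invertibleTens _ _ (diag_dK_mul_inv hr)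
  have key : hammingAD D r * (hammingADstar D r * PP D r)
      = hammingADstar D r * (hammingAD D r * (PP D r * tens D r (Matrix.diagonal (lamK r)))) := by
    rw [AD_eq, ADstar_eq]
    unfold PP
    simp only [tens_mul]
    exact congrArg (tens D r) (by rw [← Matrix.mul_assoc, ← Matrix.mul_assoc (Matrix.diagonal (dK r)), keyK hr])
  have hAinv : (hammingAD D r)⁻¹ * hammingAD D r = 1 :=
    Matrix.nonsing_inv_mul _ (Matrix.isUnit_det_of_invertible _)
  have hSinv : (hammingADstar D r)⁻¹ * hammingADstar D r = 1 :=
    Matrix.nonsing_inv_mul _ (Matrix.isUnit_det_of_invertible _)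
  have hPinv : PP D r * (PP D r)⁻¹ = 1 :=
    Matrix.mul_nonsing_inv _ (Matrix.isUnit_det_of_invertible _)
  have hCP : hammingC D r * PP D r = PP D r * LL D r := by
    have e1 : hammingC D r * PP D r = (hammingAD D r)⁻¹ * ((hammingADstar D r)⁻¹
        * (hammingAD D r * (hammingADstar D r * PP D r))) := by
      unfold hammingC
      simp only [Matrix.mul_assoc]
    rw [e1, key, ← Matrix.mul_assoc ((hammingADstar D r)⁻¹) (hammingADstar D r) _, hSinv,
      Matrix.one_mul, ← Matrix.mul_assoc, hAinv, Matrix.one_mul]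
    unfold LL PP
    rw [tens_mul, ← tens_diagonal, tens_mul]
  calc hammingC D r = hammingC D r * (PP D r * (PP D r)⁻¹) := by rw [hPinv, Matrix.mul_one]
    _ = (hammingC D r * PP D r) * (PP D r)⁻¹ := by rw [Matrix.mul_assoc]
    _ = PP D r * LL D r * (PP D r)⁻¹ := by rw [hCP]

lemma dim_eq_card (hr : 3 ≤ r) (μ : ℂ) :
    Module.finrank ℂ (matEigenspace (hammingC D r) μ)
      = (Finset.univ.filter fun ψ : Fin D → Fin r => (∏ k, lamK r (ψ k)) = μ).card := by
  haveI : Invertible (PP D r) := invertiblePP hr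
  rw [hC_eq hr, finrank_matEigenspace_conj]
  exact finrank_matEigenspace_diagonal _ μ

end DLEVEL

section COUNT
open Matrix Finset
variable {D r : ℕ} [NeZero r]

/-- the set of coordinates equal to `0`. -/
def F0 (ψ : Fin D → Fin r) : Finset (Fin D) := Finset.univ.filter fun k => ψ k = 0

/-- the set of coordinates equal to `1`. -/
def F1 (ψ : Fin D → Fin r) : Finset (Fin D) := Finset.univ.filter fun k => ψ k = 1

lemma prod_zpow_sum {α : Type*} (x : ℂ) (hx : x ≠ 0) (s : Finset α) (f : α → ℤ) :
    ∏ k ∈ s, x ^ f k = x ^ (∑ k ∈ s, f k) := by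
  induction s using Finset.cons_induction with
  | empty => simp
  | cons a s ha ih => rw [Finset.prod_cons, Finset.sum_cons, ih, zpow_add₀ hx]

lemma lam_prod (hr : 3 ≤ r) (ψ : Fin D → Fin r) :
    ∏ k, lamK r (ψ k) = (1 - (r:ℂ)) ^ (((F0 ψ).card : ℤ) - ((F1 ψ).card : ℤ)) := by
  have hne := hrC' hr
  have h01 := f01 hr
  have hpt : ∀ k, lamK r (ψ k)
      = (1 - (r:ℂ)) ^ ((if ψ k = 0 then (1:ℤ) else 0) - (if ψ k = 1 then (1:ℤ) else 0)) := by
    intro k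
    by_cases h0 : ψ k = 0
    · have h1 : ¬ ψ k = 1 := fun h => h01 (h0.symm.trans h)
      simp [lamK, h0, h1, show r ≠ 1 by omega]
    · by_cases h1 : ψ k = 1
      · simp [lamK, h0, h1, Ne.symm h01, show r ≠ 1 by omega]
      · simp [lamK, h0, h1]
  rw [Finset.prod_congr rfl (fun k _ => hpt k), prod_zpow_sum _ hne, Finset.sum_sub_distrib,
    Finset.sum_boole, Finset.sum_boole]
  rfl

lemma zpowInjC (hr : 3 ≤ r) {a b : ℤ} (h : (1 - (r:ℂ))^a = (1 - (r:ℂ))^b) : a = b := by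
  have h3 : (3:ℝ) ≤ (r:ℝ) := by exact_mod_cast hr
  have habs := congrArg (fun z : ℂ => ‖z‖) h
  simp only [norm_zpow] at habs
  have hab : ‖(1 - (r:ℂ))‖ = (r:ℝ) - 1 := by
    rw [show (1 - (r:ℂ)) = (((1 - (r:ℝ)) : ℝ) : ℂ) by push_cast; ring, Complex.norm_real,
      Real.norm_eq_abs, abs_of_nonpos (by linarith)]
    ring
  rw [hab] at habs
  exact zpow_right_injective₀ (by linarith) (by intro hc; linarith) habs

lemma card_filter_lam (hr : 3 ≤ r) (s : ℤ) :
    (Finset.univ.filter fun ψ : Fin D → Fin r =>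
        (∏ k, lamK r (ψ k)) = (1 - (r:ℂ)) ^ s)
    = (Finset.univ.filter fun ψ : Fin D → Fin r =>
        ((F0 ψ).card : ℤ) - ((F1 ψ).card : ℤ) = s) := by
  apply Finset.filter_congr
  intro ψ _
  rw [lam_prod hr]
  exact ⟨fun h => zpowInjC hr h, fun h => by rw [h]⟩

lemma count_inner (hr : 3 ≤ r) (S T : Finset (Fin D)) (hST : Disjoint S T) :
    (Finset.univ.filter fun ψ : Fin D → Fin r => F0 ψ = S ∧ F1 ψ = T).card
      = (r - 2) ^ (D - S.card - T.card) := by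
  have h01 := f01 hr
  have hset : (Finset.univ.filter fun ψ : Fin D → Fin r => F0 ψ = S ∧ F1 ψ = T)
      = Fintype.piFinset (fun k => if k ∈ S then {0}
          else if k ∈ T then {1} else ({0, 1}ᶜ : Finset (Fin r))) := by
    ext ψ
    simp only [Finset.mem_filter, Finset.mem_univ, true_and, Fintype.mem_piFinset]
    constructor
    · rintro ⟨h0, h1⟩ k
      by_cases hkS : k ∈ S
      · rw [if_pos hkS]
        have : k ∈ F0 ψ := h0 ▸ hkS
        simp only [F0, Finset.mem_filter] at this
        simp [this.2]
      · rw [if_neg hkS]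
        by_cases hkT : k ∈ T
        · rw [if_pos hkT]
          have : k ∈ F1 ψ := h1 ▸ hkT
          simp only [F1, Finset.mem_filter] at this
          simp [this.2]
        · rw [if_neg hkT]
          simp only [Finset.mem_compl, Finset.mem_insert, Finset.mem_singleton]
          rintro (h | h)
          · exact hkS (h0 ▸ (by simp [F0, h]))
          · exact hkT (h1 ▸ (by simp [F1, h]))
    · intro h
      constructor
      · ext k
        specialize h k
        simp only [F0, Finset.mem_filter, Finset.mem_univ, true_and]
        by_cases hkS : k ∈ S
        · rw [if_pos hkS] at h
          simp only [Finset.mem_singleton] at h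
          exact ⟨fun _ => hkS, fun _ => h⟩
        · rw [if_neg hkS] at h
          refine ⟨fun hk => ?_, fun hk => absurd hk hkS⟩
          by_cases hkT : k ∈ T
          · rw [if_pos hkT] at h
            simp only [Finset.mem_singleton] at h
            exact absurd (hk.symm.trans h) h01
          · rw [if_neg hkT] at h
            simp only [Finset.mem_compl, Finset.mem_insert, Finset.mem_singleton] at h
            exact absurd (Or.inl hk) h
      · ext k
        specialize h k
        simp only [F1, Finset.mem_filter, Finset.mem_univ, true_and]
        by_cases hkT : k ∈ T
        · by_cases hkS : k ∈ S
          · exact absurd hkT (Finset.disjoint_left.mp hST hkS)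
          · rw [if_neg hkS, if_pos hkT] at h
            simp only [Finset.mem_singleton] at h
            exact ⟨fun _ => hkT, fun _ => h⟩
        · refine ⟨fun hk => ?_, fun hk => absurd hk hkT⟩
          by_cases hkS : k ∈ S
          · rw [if_pos hkS] at h
            simp only [Finset.mem_singleton] at h
            exact absurd (hk.symm.trans h) (Ne.symm h01)
          · rw [if_neg hkS, if_neg hkT] at h
            simp only [Finset.mem_compl, Finset.mem_insert, Finset.mem_singleton] at h
            exact absurd (Or.inr hk) h
  rw [hset, Fintype.card_piFinset]
  have hcard : ∀ k : Fin D, (if k ∈ S then ({0}:Finset (Fin r))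
      else if k ∈ T then {1} else ({0,1}ᶜ)).card = if k ∈ S ∪ T then 1 else (r - 2) := by
    intro k
    by_cases hkS : k ∈ S
    · simp [hkS, Finset.mem_union]
    · by_cases hkT : k ∈ T
      · simp [hkS, hkT, Finset.mem_union]
      · simp only [if_neg hkS, if_neg hkT, Finset.mem_union, hkS, hkT, or_self, if_neg,
          not_false_iff]
        rw [Finset.card_compl, Finset.card_insert_of_notMem (by simp [h01]),
          Finset.card_singleton, Fintype.card_fin]
  rw [Finset.prod_congr rfl (fun k _ => hcard k), Finset.prod_ite, Finset.prod_const,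
    Finset.prod_const, one_pow, one_mul]
  congr 1
  have hsplit := Finset.card_filter_add_card_filter_not
    (s := (Finset.univ : Finset (Fin D))) (p := fun k => k ∈ S ∪ T)
  have hmem : (Finset.univ.filter fun k : Fin D => k ∈ S ∪ T) = S ∪ T := by
    ext k; simp
  rw [hmem] at hsplit
  have hu : (S ∪ T).card = S.card + T.card := Finset.card_union_of_disjoint hST
  simp only [Finset.card_univ, Fintype.card_fin] at hsplit
  omega

lemma count_mid (hr : 3 ≤ r) (S : Finset (Fin D)) (b : ℕ) :
    (Finset.univ.filter fun ψ : Fin D → Fin r => F0 ψ = S ∧ (F1 ψ).card = b).card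
      = (D - S.card).choose b * (r - 2) ^ (D - S.card - b) := by
  have h01 := f01 hr
  rw [Finset.card_eq_sum_card_fiberwise (f := fun ψ => F1 ψ)
    (t := Finset.powersetCard b Sᶜ) ?_]
  · rw [Finset.sum_congr rfl (fun T hT => ?_), Finset.sum_const,
      Finset.card_powersetCard, Finset.card_compl, Fintype.card_fin, smul_eq_mul]
    obtain ⟨hsub, hcard⟩ := Finset.mem_powersetCard.mp hT
    have hdisj : Disjoint S T :=
      Finset.disjoint_left.mpr fun a haS haT => (Finset.mem_compl.mp (hsub haT)) haS
    have heq : (Finset.univ.filter fun ψ : Fin D → Fin r =>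
        (F0 ψ = S ∧ (F1 ψ).card = b) ∧ F1 ψ = T)
        = (Finset.univ.filter fun ψ : Fin D → Fin r => F0 ψ = S ∧ F1 ψ = T) := by
      ext ψ
      simp only [Finset.mem_filter, Finset.mem_univ, true_and]
      exact ⟨fun ⟨⟨h0, _⟩, h1⟩ => ⟨h0, h1⟩, fun ⟨h0, h1⟩ => ⟨⟨h0, h1 ▸ hcard⟩, h1⟩⟩
    rw [Finset.filter_filter, heq, count_inner hr S T hdisj, hcard]
  · intro ψ hψ
    simp only [Finset.mem_coe, Finset.mem_filter, Finset.mem_univ, true_and] at hψ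
    rw [Finset.mem_coe, Finset.mem_powersetCard]
    refine ⟨fun k hk => ?_, hψ.2⟩
    simp only [F1, Finset.mem_filter, Finset.mem_univ, true_and] at hk
    rw [Finset.mem_compl, ← hψ.1]
    simp [F0, hk, Ne.symm h01]

lemma count_outer (hr : 3 ≤ r) (a b : ℕ) :
    (Finset.univ.filter fun ψ : Fin D → Fin r =>
        (F0 ψ).card = a ∧ (F1 ψ).card = b).card
      = D.choose a * ((D - a).choose b * (r - 2) ^ (D - a - b)) := by
  rw [Finset.card_eq_sum_card_fiberwise (f := fun ψ => F0 ψ)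
    (t := Finset.powersetCard a Finset.univ) ?_]
  · rw [Finset.sum_congr rfl (fun S hS => ?_), Finset.sum_const,
      Finset.card_powersetCard, Finset.card_univ, Fintype.card_fin, smul_eq_mul]
    obtain ⟨_, hcard⟩ := Finset.mem_powersetCard.mp hS
    have heq : (Finset.univ.filter fun ψ : Fin D → Fin r =>
        ((F0 ψ).card = a ∧ (F1 ψ).card = b) ∧ F0 ψ = S)
        = (Finset.univ.filter fun ψ : Fin D → Fin r => F0 ψ = S ∧ (F1 ψ).card = b) := by
      ext ψ
      simp only [Finset.mem_filter, Finset.mem_univ, true_and]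
      exact ⟨fun ⟨⟨_, h1⟩, h0⟩ => ⟨h0, h1⟩, fun ⟨h0, h1⟩ => ⟨⟨h0 ▸ hcard, h1⟩, h0⟩⟩
    rw [Finset.filter_filter, heq, count_mid hr S b, hcard]
  · intro ψ hψ
    simp only [Finset.mem_coe, Finset.mem_filter, Finset.mem_univ, true_and] at hψ
    exact Finset.mem_powersetCard.mpr ⟨Finset.subset_univ _, hψ.1⟩

end COUNT

theorem stmt17 (D r : ℕ) (hD : 1 ≤ D) (hr : 3 ≤ r)
    (s : ℤ) (hs₁ : -(D : ℤ) ≤ s) (hs₂ : s ≤ (D : ℤ)) :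
    Module.finrank ℂ
      ↥(matEigenspace (@hammingC D r ⟨by omega⟩) ((1 - (r : ℂ)) ^ s)) =
    ∑ ij ∈ (Finset.range (D + 1) ×ˢ Finset.range (D + 1)).filter
        (fun ij => D ≤ ij.1 + ij.2 ∧ (ij.2 : ℤ) - (ij.1 : ℤ) = s),
      Nat.choose D ij.1 * Nat.choose ij.1 (D - ij.2) * (r - 2) ^ (ij.1 + ij.2 - D) := by
  haveI : NeZero r := ⟨by omega⟩
  have h01 : (0 : Fin r) ≠ 1 := f01 hr
  have hdim := dim_eq_card (D := D) (r := r) hr ((1 - (r:ℂ))^s)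
  rw [card_filter_lam hr] at hdim
  refine Eq.trans hdim ?_
  have hmaps : ∀ ψ ∈ (Finset.univ.filter fun ψ : Fin D → Fin r =>
      ((F0 ψ).card : ℤ) - ((F1 ψ).card : ℤ) = s),
      (D - (F0 ψ).card, D - (F1 ψ).card) ∈
        (Finset.range (D + 1) ×ˢ Finset.range (D + 1)).filter
          (fun ij => D ≤ ij.1 + ij.2 ∧ (ij.2 : ℤ) - (ij.1 : ℤ) = s) := by
    intro ψ hψ
    simp only [Finset.mem_filter, Finset.mem_univ, true_and] at hψ
    have hdisj : Disjoint (F0 ψ) (F1 ψ) := Finset.disjoint_left.mpr (fun k hk0 hk1 => by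
      simp only [F0, Finset.mem_filter, Finset.mem_univ, true_and] at hk0
      simp only [F1, Finset.mem_filter, Finset.mem_univ, true_and] at hk1
      exact h01 (hk0 ▸ hk1))
    have hsum : (F0 ψ).card + (F1 ψ).card ≤ D := by
      rw [← Finset.card_union_of_disjoint hdisj]
      exact le_trans (Finset.card_le_univ _) (by simp)
    refine Finset.mem_filter.mpr ⟨Finset.mem_product.mpr ⟨?_, ?_⟩, ?_, ?_⟩
    · rw [Finset.mem_range]; omega
    · rw [Finset.mem_range]; omega
    · omega
    · omega
  rw [Finset.card_eq_sum_card_fiberwise hmaps]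
  refine Finset.sum_congr rfl (fun ij hij => ?_)
  simp only [Finset.mem_filter, Finset.mem_product, Finset.mem_range] at hij
  obtain ⟨⟨hi, hj⟩, hij1, hij2⟩ := hij
  rw [Finset.filter_filter]
  have heq : (Finset.univ.filter fun ψ : Fin D → Fin r =>
      (((F0 ψ).card : ℤ) - ((F1 ψ).card : ℤ) = s)
        ∧ (D - (F0 ψ).card, D - (F1 ψ).card) = ij)
      = (Finset.univ.filter fun ψ : Fin D → Fin r =>
        (F0 ψ).card = D - ij.1 ∧ (F1 ψ).card = D - ij.2) := by
    ext ψ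
    have hb0 : (F0 ψ).card ≤ D := le_trans (Finset.card_le_univ _) (by simp)
    have hb1 : (F1 ψ).card ≤ D := le_trans (Finset.card_le_univ _) (by simp)
    simp only [Finset.mem_filter, Finset.mem_univ, true_and, Prod.ext_iff]
    constructor
    · rintro ⟨hc, hc1, hc2⟩
      constructor <;> omega
    · rintro ⟨hc1, hc2⟩
      refine ⟨by omega, by omega, by omega⟩
  rw [heq, count_outer hr]
  have e1 : D - (D - ij.1) = ij.1 := by omega
  have hle : ij.1 ≤ D := by omega
  rw [e1, show ij.1 - (D - ij.2) = ij.1 + ij.2 - D by omega, Nat.choose_symm hle, ← mul_assoc]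
end

section
/- Fix integers D ≥ 1 and r ≥ 3, and let i, j be integers with 0 ≤ i, j ≤ D and i + j ≥ D. Set α = D − i, β = D − j, η = i + j − D. Let Ṽ_{ij} ⊆ ℂ^𝕏 denote the span of all tensor-product vectors v(y) = Π_{k=1}^{D} v_k(y_k) for which there is a partition of {1,…,D} into sets S₀, S₁, S₂ with |S₀| = α, |S₁| = β, |S₂| = η such that v_k = δ₀ (the vector with a one in coordinate 0 and zeros elsewhere in ℂ^{Fin r}) for k ∈ S₀, v_k = 𝟙 (the all-ones vector on Fin r) for k ∈ S₁, and v_k(0) = 0 and Σ_{a ∈ Fin r} v_k(a) = 0 for k ∈ S₂. Then dim Ṽ_{ij} = binom(D,i)·binom(i,D−j)·(r−2)^{i+j−D}. -/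
/-- The split-decomposition summand `Ṽ_{ij}` of the standard module of the Hamming graph
`H(D,r)`: the span of the tensor-product vectors `y ↦ Π_k v_k(y_k)` for which the index set
is partitioned into sets `S₀, S₁, S₂` of sizes `D−i, D−j, i+j−D` on which the factor `v_k`
is `δ₀`, the all-ones vector `𝟙`, and a vector vanishing at `0` with coordinate sum `0`,
respectively. -/
noncomputable def Vtilde (D r i j : ℕ) (hr : 3 ≤ r) :
    Submodule ℂ ((Fin D → Fin r) → ℂ) :=
  Submodule.span ℂ
    {v : (Fin D → Fin r) → ℂ |
      ∃ (vk : Fin D → Fin r → ℂ) (S₀ S₁ S₂ : Finset (Fin D)),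
        S₀ ∪ S₁ ∪ S₂ = Finset.univ ∧
        Disjoint S₀ S₁ ∧ Disjoint S₀ S₂ ∧ Disjoint S₁ S₂ ∧
        S₀.card = D - i ∧ S₁.card = D - j ∧ S₂.card = i + j - D ∧
        (∀ k ∈ S₀, vk k = fun a => if a = (⟨0, by omega⟩ : Fin r) then 1 else 0) ∧
        (∀ k ∈ S₁, vk k = fun _ => 1) ∧
        (∀ k ∈ S₂, vk k (⟨0, by omega⟩ : Fin r) = 0 ∧ ∑ a : Fin r, vk k a = 0) ∧
        v = fun y => ∏ k : Fin D, vk k (y k)}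

/-! The vectors `δ₀`, `𝟙` and `δ_a − δ₁` (`a ≠ 0, 1`) form a basis of `ℂ^{Fin r}` (this uses
`r − 1 ≠ 0`), and the last `r − 2` of them span the vectors vanishing at `0` with coordinate sum
`0`. Pure tensors of basis vectors form a basis of `ℂ^𝕏`, and expanding each generator of `Ṽ_{ij}`
multilinearly shows that `Ṽ_{ij}` is spanned by the basis tensors with exactly `D − i` factors `δ₀`
and `D − j` factors `𝟙`. There are `binom(D, D−i) · binom(i, D−j) · (r−2)^{i+j−D}` of them. -/

open Finset Submodule

section PureTensor
variable {R X ι κ : Type*} [CommSemiring R] [Fintype κ]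

def pureTensor (v : κ → X → R) : (κ → X) → R := fun y => ∏ k, v k (y k)

theorem pureTensor_mem_span_image_pi (b : ι → X → R) (A : κ → Set ι) (v : κ → X → R)
    (hv : ∀ k, v k ∈ span R (b '' A k)) :
    pureTensor v ∈ span R ((fun g => pureTensor (b ∘ g)) '' Set.univ.pi A) := by
  classical
  choose l hlA hl using fun k => (Finsupp.mem_span_image_iff_linearCombination R).mp (hv k)
  have expand : pureTensor v =
      ∑ g ∈ Fintype.piFinset fun k => (l k).support, (∏ k, l k (g k)) • pureTensor (b ∘ g) := by
    ext y
    simp only [pureTensor, ← hl, Finsupp.linearCombination_apply, Finsupp.sum, Finset.sum_apply,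
      Pi.smul_apply, smul_eq_mul, Function.comp_apply, prod_univ_sum, prod_mul_distrib]
  rw [expand]
  exact sum_mem fun g hg => smul_mem _ _
    (subset_span ⟨g, fun k _ => hlA k (Fintype.mem_piFinset.mp hg k), rfl⟩)

theorem pureTensor_single [DecidableEq X] (y : κ → X) :
    pureTensor (fun k => Pi.single (y k) (1 : R)) = Pi.single y 1 := by
  ext x
  simp [pureTensor, Pi.single_apply, prod_ite_zero, funext_iff, eq_comm]

theorem top_le_span_range_pureTensor [Finite X] (b : ι → X → R)
    (hb : ⊤ ≤ span R (Set.range b)) :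
    ⊤ ≤ span R (Set.range fun g : κ → ι => pureTensor (b ∘ g)) := by
  classical
  have := Fintype.ofFinite X
  rw [← (Pi.basisFun R (κ → X)).span_eq, span_le]
  rintro _ ⟨y, rfl⟩
  rw [Pi.basisFun_apply, ← pureTensor_single, ← Set.image_univ, ← Set.pi_univ]
  exact pureTensor_mem_span_image_pi b _ _ fun k => by
    rw [Set.image_univ]; exact hb mem_top

end PureTensor

theorem linearIndependent_pureTensor {K X ι κ : Type*} [Field K] [Fintype X] [Fintype ι]
    [Fintype κ] (b : ι → X → K) (hb : ⊤ ≤ span K (Set.range b))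
    (hcard : Fintype.card ι = Fintype.card X) :
    LinearIndependent K fun g : κ → ι => pureTensor (b ∘ g) := by
  classical
  refine linearIndependent_of_top_le_span_of_card_eq_finrank (top_le_span_range_pureTensor b hb) ?_
  simp [hcard]

section SplitBasis
variable (R : Type*) [CommRing R] {X : Type*} [DecidableEq X] (x₀ x₁ : X)

def splitBasis (x : X) : X → R :=
  if x = x₀ then Pi.single x₀ 1 else if x = x₁ then 1 else Pi.single x 1 - Pi.single x₁ 1

variable {R x₀ x₁} [Fintype X]

theorem splitBasis_apply_eq_zero_and_sum_eq_zero (hne : x₀ ≠ x₁) {x : X} (h₀ : x ≠ x₀)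
    (h₁ : x ≠ x₁) : splitBasis R x₀ x₁ x x₀ = 0 ∧ ∑ a, splitBasis R x₀ x₁ x a = 0 := by
  simp [splitBasis, h₀, h₁, hne, Pi.single_apply, Ne.symm h₀, sum_sub_distrib]

theorem mem_span_splitBasis_of_apply_eq_zero_of_sum_eq_zero (hne : x₀ ≠ x₁) {w : X → R}
    (h₀ : w x₀ = 0) (hsum : ∑ a, w a = 0) :
    w ∈ span R (splitBasis R x₀ x₁ '' ({x₀, x₁} : Set X)ᶜ) := by
  have hrest : ∑ x ∈ ({x₀, x₁} : Finset X)ᶜ, w x = -w x₁ := by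
    rw [← sum_compl_add_sum {x₀, x₁} w, sum_pair hne, h₀] at hsum
    linear_combination hsum
  have hw : w = ∑ x ∈ ({x₀, x₁} : Finset X)ᶜ, w x • splitBasis R x₀ x₁ x := by
    ext a
    have hb : ∀ x ∈ ({x₀, x₁} : Finset X)ᶜ,
        (w x • splitBasis R x₀ x₁ x) a =
          (if a = x then w x else 0) - if a = x₁ then w x else 0 := by
      intro x hx
      simp only [mem_compl, mem_insert, mem_singleton, not_or] at hx
      simp [splitBasis, hx.1, hx.2, Pi.single_apply, mul_sub]
    rw [Finset.sum_apply, sum_congr rfl hb, sum_sub_distrib, sum_ite_eq, sum_ite_irrel, hrest]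
    by_cases ha₀ : a = x₀
    · simp [ha₀, hne, h₀]
    by_cases ha₁ : a = x₁ <;> simp [ha₀, ha₁]
  rw [hw]
  exact sum_mem fun x hx => smul_mem _ _ (subset_span ⟨x, by simpa using hx, rfl⟩)

end SplitBasis

theorem top_le_span_range_splitBasis {K X : Type*} [Field K] [CharZero K] [Fintype X]
    [DecidableEq X] {x₀ x₁ : X} (hne : x₀ ≠ x₁) :
    ⊤ ≤ span K (Set.range (splitBasis K x₀ x₁)) := by
  intro v _
  have hcard : (Fintype.card X : K) - 1 ≠ 0 := by
    have := Fintype.one_lt_card_iff_nontrivial.mpr ⟨x₀, x₁, hne⟩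
    rw [sub_ne_zero]; exact_mod_cast this.ne'
  -- `c` is the coefficient of `𝟙` that makes `w` vanish at `x₀` and sum to zero
  set c : K := (∑ a, v a - v x₀) / (Fintype.card X - 1)
  set w : X → K := fun a => v a - (if a = x₀ then v x₀ - c else 0) - c
  have hw : w ∈ span K (splitBasis K x₀ x₁ '' ({x₀, x₁} : Set X)ᶜ) := by
    refine mem_span_splitBasis_of_apply_eq_zero_of_sum_eq_zero hne (by simp [w]) ?_
    simp only [w, sum_sub_distrib, sum_ite_eq', mem_univ, if_true, sum_const, card_univ,
      nsmul_eq_mul]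
    linear_combination -div_mul_cancel₀ (∑ a, v a - v x₀) hcard
  have hv : v = w + (v x₀ - c) • splitBasis K x₀ x₁ x₀ + c • splitBasis K x₀ x₁ x₁ := by
    ext a
    by_cases ha : a = x₀ <;> simp [w, splitBasis, hne.symm, ha]
  rw [hv]
  refine add_mem (add_mem (span_mono (Set.image_subset_range _ _) hw) ?_) ?_ <;>
    exact smul_mem _ _ (subset_span ⟨_, rfl⟩)

section Counting
variable {κ X : Type*} [Fintype κ] [DecidableEq κ] [Fintype X] [DecidableEq X]

def wordsWithCounts (x₀ x₁ : X) (m n : ℕ) : Finset (κ → X) :=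
  {g | #{k | g k = x₀} = m ∧ #{k | g k = x₁} = n}

variable {x₀ x₁ : X}

theorem card_filter_fibers_eq (hne : x₀ ≠ x₁) {S T : Finset κ} (hST : Disjoint S T) :
    #{g : κ → X | ({k | g k = x₀} : Finset κ) = S ∧ ({k | g k = x₁} : Finset κ) = T} =
      (Fintype.card X - 2) ^ (Fintype.card κ - #S - #T) := by
  set t : κ → Finset X := fun k => if k ∈ S then {x₀} else if k ∈ T then {x₁} else {x₀, x₁}ᶜ
  have ht : ({g : κ → X | ({k | g k = x₀} : Finset κ) = S ∧
      ({k | g k = x₁} : Finset κ) = T} : Finset _) = Fintype.piFinset t := by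
    ext g
    simp only [mem_filter, mem_univ, true_and, Fintype.mem_piFinset, Finset.ext_iff]
    constructor
    · rintro ⟨hS, hT⟩ k
      have := hS k
      have := hT k
      by_cases h₀ : k ∈ S <;> by_cases h₁ : k ∈ T <;> simp_all [t]
    · intro h
      refine ⟨fun k => ?_, fun k => ?_⟩ <;> have := h k <;>
        by_cases h₀ : k ∈ S <;> by_cases h₁ : k ∈ T <;> simp_all [t, disjoint_left, hne.symm]
  have hcard : ∀ k, #(t k) = if k ∈ (S ∪ T)ᶜ then Fintype.card X - 2 else 1 := by
    intro k
    by_cases hS : k ∈ S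
    · simp [t, hS]
    by_cases hT : k ∈ T
    · simp [t, hS, hT]
    · rw [if_pos (by simp [hS, hT])]
      simp only [t, if_neg hS, if_neg hT, card_compl, card_pair hne]
  rw [ht, Fintype.card_piFinset, prod_congr rfl fun k _ => hcard k, prod_ite_mem, univ_inter,
    prod_const, card_compl, card_union_of_disjoint hST, Nat.sub_sub]

theorem card_wordsWithCounts (hne : x₀ ≠ x₁) (m n : ℕ) :
    #(wordsWithCounts (κ := κ) x₀ x₁ m n) =
      (Fintype.card κ).choose m * (Fintype.card κ - m).choose n *
        (Fintype.card X - 2) ^ (Fintype.card κ - m - n) := by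
  set W := wordsWithCounts (κ := κ) x₀ x₁ m n
  have hfiber₀ : #W = ∑ S ∈ powersetCard m univ, #{g ∈ W | ({k | g k = x₀} : Finset κ) = S} :=
    card_eq_sum_card_fiberwise fun g hg => by
      simp only [W, wordsWithCounts, coe_filter, mem_univ, true_and, Set.mem_ofPred_eq] at hg
      simp [mem_powersetCard, hg.1]
  have hfiber₁ : ∀ S ∈ powersetCard m univ, #{g ∈ W | ({k | g k = x₀} : Finset κ) = S} =
      (Fintype.card κ - m).choose n * (Fintype.card X - 2) ^ (Fintype.card κ - m - n) := by
    intro S hS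
    rw [mem_powersetCard] at hS
    have hfiber : ∀ T ∈ powersetCard n Sᶜ,
        #{g ∈ W | ({k | g k = x₀} : Finset κ) = S ∧ ({k | g k = x₁} : Finset κ) = T} =
          (Fintype.card X - 2) ^ (Fintype.card κ - m - n) := by
      intro T hT
      rw [mem_powersetCard, subset_compl_iff_disjoint_left] at hT
      rw [← hS.2, ← hT.2, ← card_filter_fibers_eq hne hT.1]
      congr 1
      ext g
      simp only [W, wordsWithCounts, mem_filter, mem_univ, true_and]
      constructor
      · rintro ⟨-, h₀, h₁⟩
        exact ⟨h₀, h₁⟩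
      · rintro ⟨h₀, h₁⟩
        exact ⟨⟨by rw [h₀, hS.2], by rw [h₁, hT.2]⟩, h₀, h₁⟩
    rw [card_eq_sum_card_fiberwise (f := fun g => ({k | g k = x₁} : Finset κ))
      (t := powersetCard n Sᶜ)]
    · simp only [filter_filter]
      rw [sum_congr rfl hfiber, sum_const, card_powersetCard, card_compl, hS.2, smul_eq_mul]
    · intro g hg
      simp only [W, wordsWithCounts, coe_filter, mem_filter, mem_univ, true_and,
        Set.mem_ofPred_eq] at hg
      refine mem_powersetCard.2 ⟨fun k hk => ?_, hg.1.2⟩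
      rw [← hg.2, mem_compl]
      simp only [mem_filter, mem_univ, true_and] at hk ⊢
      rw [hk]
      exact hne.symm
  rw [hfiber₀, sum_congr rfl hfiber₁, sum_const, card_powersetCard, card_univ, smul_eq_mul,
    mul_assoc]

end Counting

theorem Vtilde_eq_span_pureTensor_splitBasis {D r i j : ℕ} (hr : 3 ≤ r) (hi : i ≤ D)
    (hj : j ≤ D) :
    Vtilde D r i j hr =
      span ℂ ((fun g => pureTensor (splitBasis ℂ ⟨0, by omega⟩ ⟨1, by omega⟩ ∘ g)) ''
        ↑(wordsWithCounts (κ := Fin D) (⟨0, by omega⟩ : Fin r) ⟨1, by omega⟩ (D - i) (D - j))) := by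
  set x₀ : Fin r := ⟨0, by omega⟩
  set x₁ : Fin r := ⟨1, by omega⟩
  have hne : x₀ ≠ x₁ := by simp [x₀, x₁, Fin.ext_iff]
  apply le_antisymm
  · rw [Vtilde, span_le]
    rintro _ ⟨v, S₀, S₁, S₂, hcover, h₀₁, -, -, hS₀, hS₁, -, hv₀, hv₁, hv₂, rfl⟩
    set A : Fin D → Set (Fin r) := fun k =>
      if k ∈ S₀ then {x₀} else if k ∈ S₁ then {x₁} else ({x₀, x₁} : Set (Fin r))ᶜ
    have hvA : ∀ k, v k ∈ span ℂ (splitBasis ℂ x₀ x₁ '' A k) := by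
      intro k
      by_cases h₀ : k ∈ S₀
      · refine subset_span ⟨x₀, by simp [A, h₀], ?_⟩
        ext a
        simp [hv₀ k h₀, splitBasis, Pi.single_apply, x₀]
      by_cases h₁ : k ∈ S₁
      · refine subset_span ⟨x₁, by simp [A, h₀, h₁], ?_⟩
        ext a
        simp [hv₁ k h₁, splitBasis, hne.symm]
      have h₂ : k ∈ S₂ := by simpa [h₀, h₁] using hcover.ge (mem_univ k)
      simpa [A, h₀, h₁] using
        mem_span_splitBasis_of_apply_eq_zero_of_sum_eq_zero hne (hv₂ k h₂).1 (hv₂ k h₂).2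
    have hA : Set.univ.pi A ⊆
        (wordsWithCounts (κ := Fin D) x₀ x₁ (D - i) (D - j) : Set (Fin D → Fin r)) := by
      intro g hg
      have hfib : ∀ k, (g k = x₀ ↔ k ∈ S₀) ∧ (g k = x₁ ↔ k ∈ S₁) := by
        intro k
        have hgk : g k ∈ A k := hg k (Set.mem_univ k)
        by_cases h₀ : k ∈ S₀
        · simp only [A, h₀, if_true, Set.mem_singleton_iff] at hgk
          simp [hgk, h₀, disjoint_left.mp h₀₁ h₀, hne]
        by_cases h₁ : k ∈ S₁
        · simp only [A, h₀, h₁, if_false, if_true, Set.mem_singleton_iff] at hgk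
          simp [hgk, h₀, h₁, hne.symm]
        · simp only [A, h₀, h₁, if_false, Set.mem_compl_iff, Set.mem_insert_iff,
            Set.mem_singleton_iff, not_or] at hgk
          simp [hgk.1, hgk.2, h₀, h₁]
      rw [mem_coe, wordsWithCounts, mem_filter, ← hS₀, ← hS₁]
      refine ⟨mem_univ g, congr_arg card ?_, congr_arg card ?_⟩ <;> ext k <;> simp [hfib k]
    exact span_mono (Set.image_mono hA) (pureTensor_mem_span_image_pi _ A v hvA)
  · rw [span_le]
    rintro _ ⟨g, hg, rfl⟩
    rw [mem_coe, wordsWithCounts, mem_filter] at hg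
    set S₀ : Finset (Fin D) := {k | g k = x₀}
    set S₁ : Finset (Fin D) := {k | g k = x₁}
    have h₀₁ : Disjoint S₀ S₁ := disjoint_filter.2 fun k _ h => h ▸ hne
    refine subset_span ⟨splitBasis ℂ x₀ x₁ ∘ g, S₀, S₁, (S₀ ∪ S₁)ᶜ, union_compl _, h₀₁,
      disjoint_compl_right.mono_left subset_union_left,
      disjoint_compl_right.mono_left subset_union_right, hg.2.1, hg.2.2, ?_, ?_, ?_, ?_, rfl⟩
    · rw [card_compl, card_union_of_disjoint h₀₁, hg.2.1, hg.2.2, Fintype.card_fin]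
      omega
    · intro k hk
      ext a
      simp [(mem_filter.1 hk).2, splitBasis, Pi.single_apply, x₀]
    · intro k hk
      ext a
      simp [(mem_filter.1 hk).2, splitBasis, hne.symm]
    · intro k hk
      simp only [S₀, S₁, mem_compl, mem_union, mem_filter, mem_univ, true_and, not_or] at hk
      exact splitBasis_apply_eq_zero_and_sum_eq_zero hne hk.1 hk.2

theorem stmt19_general (D r : ℕ) (hr : 3 ≤ r)
    (i j : ℕ) (hi : i ≤ D) (hj : j ≤ D) :
    Module.finrank ℂ ↥(Vtilde D r i j hr) =
      Nat.choose D i * Nat.choose i (D - j) * (r - 2) ^ (i + j - D) := by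
  have hne : (⟨0, by omega⟩ : Fin r) ≠ ⟨1, by omega⟩ := by simp [Fin.ext_iff]
  have hli := linearIndependent_pureTensor (κ := Fin D) _
    (top_le_span_range_splitBasis (K := ℂ) hne) rfl
  rw [Vtilde_eq_span_pureTensor_splitBasis hr hi hj, Set.image_eq_range]
  refine (finrank_span_eq_card (hli.comp _ Subtype.val_injective)).trans ?_
  rw [← Set.toFinset_card, toFinset_coe, card_wordsWithCounts hne, Fintype.card_fin,
    Fintype.card_fin, Nat.choose_symm hi, Nat.sub_sub_self hi,
    show i - (D - j) = i + j - D by omega]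

theorem stmt19 (D r : ℕ) (hD : 1 ≤ D) (hr : 3 ≤ r)
    (i j : ℕ) (hi : i ≤ D) (hj : j ≤ D) (hij : D ≤ i + j) :
    Module.finrank ℂ ↥(Vtilde D r i j hr) =
      Nat.choose D i * Nat.choose i (D - j) * (r - 2) ^ (i + j - D) :=
  stmt19_general D r hr i j hi hj
end
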